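/- arXiv:1106.1242 — 10 statements merged into one kernel-verified Lean document; each statement's English description precedes it below -/
import Mathlib

section
/- Let L and R be languages over an alphabet Σ such that L * R ⊆ Palindromes and R is infinite (as a set of words). Then L is linearly ordered by the prefix relation: for all u, v ∈ L, u is a prefix of v or v is a prefix of u. -/
/-- The language of palindromes over an alphabet `α`. -/
def Palindromes {α : Type*} : Language α := {w | w.reverse = w}

lemma finite_rev_prefix {α : Type*} (w : List α) :
    {r : List α | r.reverse <+: w}.Finite := by
  have hsub : {r : List α | r.reverse <+: w} ⊆ List.reverse '' {l | l <+: w} := by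
    intro r hr
    exact ⟨r.reverse, hr, List.reverse_reverse r⟩
  refine Set.Finite.subset (Set.Finite.image _ ?_) hsub
  have he : {l : List α | l <+: w} = {l | l ∈ w.inits} := by
    ext l; simp [List.mem_inits]
  rw [he]
  exact w.inits.finite_toSet

lemma prefix_of_pal {α : Type*} {u r : List α}
    (h : (u ++ r) ∈ Palindromes) (hnp : ¬ r.reverse <+: u) :
    u <+: r.reverse := by
  have e : r.reverse ++ u.reverse = u ++ r := by
    have e0 : (u ++ r).reverse = u ++ r := h
    rwa [List.reverse_append] at e0
  have h1 : u <+: u ++ r := List.prefix_append u r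
  have h2 : r.reverse <+: u ++ r := ⟨u.reverse, e⟩
  rcases List.prefix_or_prefix_of_prefix h1 h2 with h | h
  · exact h
  · exact absurd h hnp

/-- If `L * R ⊆ Palindromes` and `R` is infinite, then `L` is linearly
ordered by the prefix relation. -/
theorem stmt_0 {α : Type*} (L R : Language α)
    (hsub : L * R ≤ Palindromes)
    (hR : Set.Infinite (R : Set (List α))) :
    ∀ u ∈ L, ∀ v ∈ L, u <+: v ∨ v <+: u := by
  intro u hu v hv
  obtain ⟨r, hrR, hr⟩ :=
    (hR.diff ((finite_rev_prefix u).union (finite_rev_prefix v))).nonempty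
  simp only [Set.mem_union, Set.mem_setOf_eq, not_or] at hr
  have hpu : (u ++ r) ∈ Palindromes :=
    hsub (Language.mem_mul.mpr ⟨u, hu, r, hrR, rfl⟩)
  have hpv : (v ++ r) ∈ Palindromes :=
    hsub (Language.mem_mul.mpr ⟨v, hv, r, hrR, rfl⟩)
  exact List.prefix_or_prefix_of_prefix
    (prefix_of_pal hpu hr.1) (prefix_of_pal hpv hr.2)
end

section
/- Let Σ be a type and u₀, û, w be words over Σ with û nonempty. Assume that u₀ ++ w and u₀ ++ û ++ w are both palindromes (equal to their own reversals). Then for every n ∈ ℕ with n * |û| + |u₀| ≤ |w|: (i) the n-fold concatenation û^n is a prefix of w, and (ii) (û.reverse)^n ++ u₀.reverse is a suffix of w. -/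
/-- The `n`-fold concatenation of a word with itself. -/
def wordPow {α : Type*} (u : List α) (n : ℕ) : List α :=
  (List.replicate n u).flatten

lemma wordPow_length {α : Type*} (u : List α) (n : ℕ) :
    (wordPow u n).length = n * u.length := by
  simp [wordPow, List.length_flatten, Function.comp]

lemma wordPow_succ {α : Type*} (u : List α) (n : ℕ) :
    wordPow u (n + 1) = u ++ wordPow u n := by
  simp [wordPow, List.replicate_succ]

lemma wordPow_reverse {α : Type*} (u : List α) (n : ℕ) :
    (wordPow u n).reverse = wordPow u.reverse n := by
  induction n with
  | zero => simp [wordPow]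
  | succ n ih =>
      rw [wordPow_succ, List.reverse_append, ih]
      simp [wordPow, List.replicate_succ', List.flatten_append]

/-- If `u₀ ++ u` and `u₀ ++ u ++ w` are palindromes and `u ≠ []`, then for every
`n` with `n * |u| + |u₀| ≤ |w|`, `u^n` is a prefix of `w` and
`(u.reverse)^n ++ u₀.reverse` is a suffix of `w`. -/
theorem stmt_1 {α : Type*} (u₀ u w : List α) (hu : u ≠ [])
    (h₀ : (u₀ ++ w).reverse = u₀ ++ w)
    (h₁ : (u₀ ++ u ++ w).reverse = u₀ ++ u ++ w) :
    ∀ n : ℕ, n * u.length + u₀.length ≤ w.length →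
      (wordPow u n <+: w) ∧ (wordPow u.reverse n ++ u₀.reverse <:+ w) := by
  simp only [List.reverse_append, List.append_assoc] at h₀ h₁
  -- h₀ : w.reverse ++ u₀.reverse = u₀ ++ w
  -- h₁ : w.reverse ++ (u.reverse ++ u₀.reverse) = u₀ ++ (u ++ w)
  -- prefix at n implies suffix at n
  have pre_to_suf : ∀ n : ℕ, n * u.length + u₀.length ≤ w.length →
      wordPow u n <+: w → wordPow u.reverse n ++ u₀.reverse <:+ w := by
    intro n hn ⟨t, ht⟩
    have hsuf : wordPow u.reverse n ++ u₀.reverse <:+ u₀ ++ w := by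
      refine ⟨t.reverse, ?_⟩
      rw [← h₀, ← ht]
      simp [List.reverse_append, wordPow_reverse]
    refine List.suffix_of_suffix_length_le hsuf (List.suffix_append u₀ w) ?_
    simp [wordPow_length]
    omega
  intro n hn
  induction n with
  | zero =>
      exact ⟨List.nil_prefix, pre_to_suf 0 hn List.nil_prefix⟩
  | succ n ih =>
      have hn' : n * u.length + u₀.length ≤ w.length := by
        have h' : (n+1) * u.length = n * u.length + u.length := by ring
        omega
      obtain ⟨-, hs⟩ := ih hn'
      obtain ⟨s, hs⟩ := hs
      have hwrev : w.reverse = u₀ ++ (wordPow u n ++ s.reverse) := by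
        rw [← hs]
        simp [List.reverse_append, ← wordPow_reverse]
      -- from h₀ : w = wordPow u n ++ s.reverse ++ u₀.reverse
      have hw2 : w = wordPow u n ++ (s.reverse ++ u₀.reverse) := by
        have := h₀
        rw [hwrev] at this
        simp only [List.append_assoc] at this
        have := List.append_cancel_left this
        rw [← this]
      -- from h₁ : u ++ w = wordPow u n ++ s.reverse ++ u.reverse ++ u₀.reverse
      have hw3 : u ++ w = wordPow u n ++ (s.reverse ++ (u.reverse ++ u₀.reverse)) := by
        have := h₁
        rw [hwrev] at this
        simp only [List.append_assoc] at this
        have := List.append_cancel_left this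
        rw [← this]
      have key : (wordPow u (n+1) ++ s.reverse) ++ u₀.reverse
          = ((wordPow u n ++ s.reverse) ++ u.reverse) ++ u₀.reverse := by
        rw [wordPow_succ]
        simp only [List.append_assoc]
        rw [← hw3, hw2]
      have key2 : wordPow u (n+1) ++ s.reverse = (wordPow u n ++ s.reverse) ++ u.reverse :=
        List.append_cancel_right key
      have hslen : w.length = s.length + (n * u.length + u₀.length) := by
        have := congrArg List.length hs
        simp [wordPow_length] at this
        omega
      have hulen : u.length ≤ s.length := by
        have h' : (n+1) * u.length = n * u.length + u.length := by ring
        omega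
      have hpre1 : wordPow u (n+1) <+: wordPow u n ++ s.reverse := by
        refine List.prefix_of_prefix_length_le ⟨s.reverse, key2⟩
          (⟨u.reverse, rfl⟩ : wordPow u n ++ s.reverse <+: (wordPow u n ++ s.reverse) ++ u.reverse)
          ?_
        simp only [List.length_append, wordPow_length, List.length_reverse, Nat.succ_mul]
        omega
      have hpre : wordPow u (n+1) <+: w := by
        refine hpre1.trans ?_
        rw [hw2]
        exact ⟨u₀.reverse, by simp⟩
      exact ⟨hpre, pre_to_suf (n+1) hn hpre⟩
end

section
/- Let L and R be languages over an alphabet Σ such that L * R ⊆ Palindromes, L contains at least two distinct words, and R is infinite (as a set of words). Then there exist a word û and a finite set of words Û such that R ⊆ {û^n ++ v | n ∈ ℕ, v ∈ Û}. -/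
private lemma lemA {α : Type*} (p : List α) (hp : 0 < p.length) :
    ∀ N s, s.length ≤ N → s = p ++ s.take (s.length - p.length) →
    ∃ n r, r < p.length ∧ s = (List.replicate n p).flatten ++ p.take r := by
  intro N
  induction N with
  | zero =>
    intro s hlen h
    have hl := congrArg List.length h
    simp only [List.length_append, List.length_take] at hl
    omega
  | succ N ih =>
    intro s hlen h
    have hl := congrArg List.length h
    simp only [List.length_append, List.length_take] at hl
    have hps : p.length ≤ s.length := by omega
    have hlen' : (s.take (s.length - p.length)).length = s.length - p.length := by
      simp only [List.length_take]; omega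
    by_cases hc : s.length - p.length < p.length
    · refine ⟨1, s.length - p.length, hc, ?_⟩
      have hsp : s.take (s.length - p.length) = p.take (s.length - p.length) := by
        have h2 := congrArg (List.take (s.length - p.length)) h
        rwa [List.take_append_of_le_length (le_of_lt hc)] at h2
      rw [List.replicate_succ, List.replicate_zero, List.flatten_cons, List.flatten_nil,
        List.append_nil, ← hsp]
      exact h
    · push_neg at hc
      have hrec : s.take (s.length - p.length) =
          p ++ (s.take (s.length - p.length)).take
            ((s.take (s.length - p.length)).length - p.length) := by
        have h2 := congrArg (List.take (s.length - p.length)) h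
        rw [List.take_append, List.take_of_length_le hc] at h2
        rw [hlen']
        exact h2
      obtain ⟨n, r, hr, hs2⟩ := ih _ (by omega) hrec
      refine ⟨n + 1, r, hr, ?_⟩
      rw [List.replicate_succ, List.flatten_cons, List.append_assoc, ← hs2]
      exact h

/-- If `L * R ⊆ Palindromes`, `L` has at least two distinct words and `R` is
infinite, then `R ⊆ u^* U` for some word `u` and some finite set of words `U`. -/
theorem stmt_2 {α : Type*} (L R : Language α)
    (hsub : L * R ≤ Palindromes)
    (hL : ∃ u ∈ L, ∃ v ∈ L, u ≠ v)
    (hR : Set.Infinite (R : Set (List α))) :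
    ∃ (u : List α) (U : Finset (List α)),
      ∀ w ∈ R, ∃ (n : ℕ), ∃ v ∈ U, w = wordPow u n ++ v := by
  classical
  obtain ⟨u₁, hu₁, u₂, hu₂, hne⟩ := hL
  obtain ⟨a, b, ha, hb, hab, hlen⟩ :
      ∃ a b, a ∈ L ∧ b ∈ L ∧ a ≠ b ∧ a.length ≤ b.length := by
    rcases le_total u₁.length u₂.length with h | h
    · exact ⟨u₁, u₂, hu₁, hu₂, hne, h⟩
    · exact ⟨u₂, u₁, hu₂, hu₁, hne.symm, h⟩
  refine ⟨b.drop a.length,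
    ((Finset.range (b.length + 1)).image fun k => (b.take k).reverse) ∪
      ((Finset.range b.length).image fun r => (b.drop a.length).take r ++ a.reverse), ?_⟩
  intro w hw
  have pala : (a ++ w).reverse = a ++ w :=
    hsub (Language.mem_mul.2 ⟨a, ha, w, hw, rfl⟩)
  have palb : (b ++ w).reverse = b ++ w :=
    hsub (Language.mem_mul.2 ⟨b, hb, w, hw, rfl⟩)
  rw [List.reverse_append] at pala palb
  by_cases hwb : w.length < b.length
  · -- short case : w is a reversed prefix of b
    refine ⟨0, (b.take w.length).reverse, ?_, ?_⟩
    · exact Finset.mem_union_left _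
        (Finset.mem_image.2 ⟨w.length, Finset.mem_range.2 (by omega), rfl⟩)
    · have h1 : w.reverse = b.take w.length := by
        have h2 := congrArg (List.take w.length) palb
        rwa [List.take_append_of_le_length (by simp), List.take_of_length_le (by simp),
          List.take_append, Nat.sub_eq_zero_of_le (le_of_lt hwb),
          List.take_zero, List.append_nil] at h2
      have h3 : w = (b.take w.length).reverse := by
        rw [← h1, List.reverse_reverse]
      simpa [wordPow] using h3
  · push_neg at hwb
    have hwa : a.length ≤ w.length := le_trans hlen hwb
    -- w.reverse = a ++ take (|w|-|a|) w
    have hra : w.reverse = a ++ w.take (w.length - a.length) := by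
      have h2 := congrArg (List.take w.length) pala
      rwa [List.take_append_of_le_length (by simp), List.take_of_length_le (by simp),
        List.take_append, List.take_of_length_le hwa] at h2
    have hrb : w.reverse = b ++ w.take (w.length - b.length) := by
      have h2 := congrArg (List.take w.length) palb
      rwa [List.take_append_of_le_length (by simp), List.take_of_length_le (by simp),
        List.take_append, List.take_of_length_le hwb] at h2
    -- b = a ++ take d w
    have hbval : b = a ++ w.take (b.length - a.length) := by
      have h2 : b ++ w.take (w.length - b.length) = a ++ w.take (w.length - a.length) :=
        hrb.symm.trans hra
      have hmin : (b.length - a.length) ⊓ (w.length - a.length) = b.length - a.length :=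
        inf_eq_left.mpr (by omega)
      have h3 := congrArg (List.take b.length) h2
      rwa [List.take_append_of_le_length le_rfl, List.take_of_length_le le_rfl,
        List.take_append, List.take_of_length_le hlen, List.take_take,
        hmin] at h3
    by_cases hd0 : b.length - a.length = 0
    · refine absurd ?_ hab
      rw [hbval, hd0, List.take_zero, List.append_nil]
    · have hdpos : 0 < b.length - a.length := Nat.pos_of_ne_zero hd0
      have hpval : b.drop a.length = w.take (b.length - a.length) := by
        conv_lhs => rw [hbval]
        rw [List.drop_append, List.drop_eq_nil_of_le le_rfl, Nat.sub_self,
          List.drop_zero, List.nil_append]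
      have hplen : (b.drop a.length).length = b.length - a.length := by
        simp
      -- key recurrence on s = w.take (|w|-|a|)
      have hkey : w.take (w.length - a.length) =
          b.drop a.length ++ w.take (w.length - a.length - (b.length - a.length)) := by
        have h2 : a ++ w.take (w.length - a.length) =
            a ++ (w.take (b.length - a.length) ++ w.take (w.length - b.length)) := by
          rw [← List.append_assoc, ← hbval]
          exact hra.symm.trans hrb
        have h3 := List.append_cancel_left h2
        rw [h3, hpval]
        congr 2
        omega
      have hh : w.take (w.length - a.length) =
          b.drop a.length ++ (w.take (w.length - a.length)).take
            ((w.take (w.length - a.length)).length - (b.drop a.length).length) := by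
        have hmin1 : (w.length - a.length) ⊓ w.length = w.length - a.length :=
          inf_eq_left.mpr (by omega)
        have hmin2 : (w.length - a.length - (b.length - a.length)) ⊓ (w.length - a.length)
            = w.length - a.length - (b.length - a.length) := inf_eq_left.mpr (by omega)
        rw [hplen, List.length_take, hmin1, List.take_take, hmin2]
        exact hkey
      obtain ⟨n, r, hr, hsrep⟩ := lemA _ (by omega) _ _ le_rfl hh
      rw [hplen] at hr
      -- drop part equals a.reverse
      have hdrop : w.drop (w.length - a.length) = a.reverse := by
        have h2 := congrArg (List.drop w.length) pala
        rw [List.drop_append, List.drop_eq_nil_of_le (by simp),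
          List.length_reverse, Nat.sub_self, List.drop_zero, List.nil_append,
          List.drop_append, List.drop_eq_nil_of_le hwa,
          List.nil_append] at h2
        exact h2.symm
      refine ⟨n, (b.drop a.length).take r ++ a.reverse, ?_, ?_⟩
      · exact Finset.mem_union_right _
          (Finset.mem_image.2 ⟨r, Finset.mem_range.2 (by omega), rfl⟩)
      · calc w = w.take (w.length - a.length) ++ w.drop (w.length - a.length) :=
              (List.take_append_drop _ w).symm
          _ = ((List.replicate n (b.drop a.length)).flatten ++ (b.drop a.length).take r)
                ++ a.reverse := by rw [hsrep, hdrop]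
          _ = wordPow (b.drop a.length) n ++ ((b.drop a.length).take r ++ a.reverse) := by
              rw [wordPow, List.append_assoc]
end

section
/- Let L and R be languages over an alphabet Σ such that L * R ⊆ Palindromes, L contains at least two distinct words, and R is infinite (as a set of words). Then there exist a finite index set J and, for each j ∈ J, words u_{j,0}, u_{j,1}, u_{j,2}, u_{j,3} such that L * R ⊆ ⋃_{j∈J} {u_{j,0}} * ({u_{j,1}})* * ({u_{j,2}})* * {u_{j,3}}, where * between languages is the product and K* denotes the Kleene star of K. -/
open Function Computability

section

variable {α : Type*}

namespace List

theorem prefix_append_of_reverse_eq {u v : List α} (hv : v.reverse = v)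
    (huv : (u ++ v).reverse = u ++ v) : v <+: u ++ v := by
  rw [← huv, reverse_append, hv]
  exact prefix_append _ _

theorem append_append_reverse_reverse_eq_iff {t s : List α} :
    (t ++ s ++ t.reverse).reverse = t ++ s ++ t.reverse ↔ s.reverse = s := by
  simp [append_assoc]

theorem prefix_reverse_of_reverse_eq {t w : List α} (h : (t ++ w).reverse = t ++ w)
    (hlen : t.length ≤ w.length) : t <+: w.reverse := by
  refine prefix_of_prefix_length_le (prefix_append t w) ?_ (by simpa using hlen)
  rw [← h, reverse_append]
  exact prefix_append _ _

theorem reverse_prefix_of_reverse_eq {t w : List α} (h : (t ++ w).reverse = t ++ w)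
    (hlen : w.length ≤ t.length) : w.reverse <+: t := by
  refine prefix_of_prefix_length_le ?_ (prefix_append t w) (by simpa using hlen)
  rw [← h, reverse_append]
  exact prefix_append _ _

end List

namespace Function.Periodic

variable {s : ℕ → α} {p e : ℕ}

theorem of_forall_lt (hp : Periodic s p) (hp0 : 0 < p) (h : ∀ i < p, s (i + e) = s i) :
    Periodic s e := by
  intro i
  have hi : i % p + e + i / p * p = i + e := by
    have := Nat.mod_add_div i p
    rw [mul_comm] at this
    omega
  have hshift := hp.nat_mul (i / p) (i % p + e)
  rw [Nat.cast_id] at hshift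
  rw [← hi, hshift, h _ (Nat.mod_lt _ hp0), hp.map_mod_nat]

theorem mod_nat (hp : Periodic s p) (he : Periodic s e) : Periodic s (e % p) := by
  intro i
  have hshift := hp.nat_mul (e / p) (i + e % p)
  rw [Nat.cast_id, add_assoc, mul_comm, Nat.mod_add_div] at hshift
  rw [← hshift, he]

theorem dvd_of_forall_lt (hp : Periodic s p) (hp0 : 0 < p)
    (hmin : ∀ q, 0 < q → Periodic s q → p ≤ q) (h : ∀ i < p, s (i + e) = s i) : p ∣ e := by
  by_contra hpe
  have := hmin _ (Nat.pos_of_ne_zero (mt Nat.dvd_of_mod_eq_zero hpe))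
    (hp.mod_nat (hp.of_forall_lt hp0 h))
  exact absurd (Nat.mod_lt e hp0) (not_lt.2 this)

end Function.Periodic

namespace Stream'

theorem periodic_cycle (z : List α) (hz : z ≠ []) : Periodic (cycle z hz) z.length := by
  intro i
  conv_lhs => rw [cycle_eq z hz]
  rw [add_comm]
  exact get_append_right _ _ _

theorem eq_take_cycle_of_prefix_append {z m : List α} (hz : z ≠ []) (h : m <+: z ++ m) :
    m = (cycle z hz).take m.length := by
  induction hn : m.length using Nat.strong_induction_on generalizing m with
  | _ n ih =>
  rcases le_total m.length z.length with hmz | hzm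
  · rw [← hn, cycle_eq z hz, take_append_of_le_length _ _ _ hmz, ← List.prefix_iff_eq_take]
    exact List.prefix_of_prefix_length_le h (List.prefix_append _ _) hmz
  · obtain ⟨m', rfl⟩ := List.prefix_of_prefix_length_le (List.prefix_append _ _) h hzm
    have hm' : m' <+: z ++ m' := by simpa using h
    have hz0 : 0 < z.length := List.length_pos_iff.2 hz
    rw [ih m'.length (by simp at hn; omega) hm' rfl, ← hn, List.length_append]
    conv_rhs => rw [cycle_eq z hz]
    rw [append_take]

theorem take_mul_add_of_periodic {s : Stream' α} {p : ℕ} (hp : Periodic s p) (k r : ℕ) :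
    s.take (p * k + r) = (List.replicate k (s.take p)).flatten ++ s.take r := by
  induction k with
  | zero => simp
  | succ k ih =>
    have hdrop : s.drop p = s := funext hp
    rw [show p * (k + 1) + r = p + (p * k + r) by ring, take_add, hdrop, ih]
    simp [List.replicate_succ]

theorem get_add_eq_of_reverse_eq {s : Stream' α} {e m : ℕ}
    (hn : (s.take (e + m)).reverse = s.take (e + m))
    (he : ((s.drop e).take m).reverse = (s.drop e).take m) (i : ℕ) (hi : i < m) :
    s (i + e) = s i := by
  have hpre : (s.drop e).take m <+: s.take (e + m) := by
    rw [take_add] at hn ⊢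
    exact List.prefix_append_of_reverse_eq he hn
  have := hpre.getElem (i := i) (by simpa using hi)
  rw [take_get, take_get] at this
  simpa [get, drop] using this

theorem reverse_eq_take_drop {X : Stream' α} {a n : ℕ} (han : a ≤ n)
    (h : (X.take a ++ (X.take n).reverse).reverse = X.take a ++ (X.take n).reverse) :
    ((X.drop a).take (n - a)).reverse = (X.drop a).take (n - a) := by
  obtain ⟨m, rfl⟩ := Nat.exists_eq_add_of_le han
  simpa [take_add] using h.symm

end Stream'

namespace Language

theorem flatten_replicate_mem_kstar (b : List α) (i : ℕ) :
    (List.replicate i b).flatten ∈ ({b} : Language α)∗ :=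
  mem_kstar.2 ⟨_, rfl, fun _ hy => (List.eq_of_mem_replicate hy : _)⟩

theorem append_flatten_replicate_mem (a b : List α) (i : ℕ) :
    a ++ (List.replicate i b).flatten ∈ ({a} : Language α) * {b}∗ :=
  mem_mul.2 ⟨a, rfl, _, flatten_replicate_mem_kstar b i, rfl⟩

theorem flatten_replicate_append_mem (b a : List α) (i : ℕ) :
    (List.replicate i b).flatten ++ a ∈ ({b} : Language α)∗ * {a} :=
  mem_mul.2 ⟨_, flatten_replicate_mem_kstar b i, a, rfl, rfl⟩

theorem exists_fin_mul_le_iSup {L R : Language α} {S T : Set (List α × List α)}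
    (hS : S.Finite) (hT : T.Finite) (hL : ∀ t ∈ L, ∃ q ∈ S, t ∈ ({q.1} : Language α) * {q.2}∗)
    (hR : ∀ w ∈ R, ∃ q ∈ T, w ∈ ({q.1} : Language α)∗ * {q.2}) :
    ∃ (k : ℕ) (u : Fin k → Fin 4 → List α),
      L * R ≤ ⨆ j : Fin k, {u j 0} * {u j 1}∗ * {u j 2}∗ * {u j 3} := by
  obtain ⟨k, e, he⟩ := (hS.prod hT).fin_embedding
  refine ⟨k, fun j => ![(e j).1.1, (e j).1.2, (e j).2.1, (e j).2.2], ?_⟩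
  rintro _ ⟨t, ht, w, hw, rfl⟩
  obtain ⟨q, hq, ht⟩ := hL t ht
  obtain ⟨q', hq', hw⟩ := hR w hw
  obtain ⟨j, hj⟩ : (q, q') ∈ Set.range e := he ▸ Set.mk_mem_prod hq hq'
  refine mem_iSup.2 ⟨j, ?_⟩
  change t ++ w ∈ ({(e j).1.1} * {(e j).1.2}∗ * {(e j).2.1}∗ * {(e j).2.2} : Language α)
  rw [hj, mul_assoc _ _ ({q'.2} : Language α)]
  exact mem_mul.2 ⟨t, ht, w, hw, rfl⟩

end Language

theorem Set.Infinite.exists_length_ge {R : Set (List α)} (hR : R.Infinite) (g : ℕ → List α)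
    {N : ℕ} (hg : ∀ w ∈ R, w.length < N → w = g w.length) : ∃ w ∈ R, N ≤ w.length := by
  by_contra! hN
  exact hR (((Set.finite_Iio N).image g).subset fun w hw =>
    ⟨w.length, hN w hw, (hg w hw (hN w hw)).symm⟩)

section PalindromicProduct

variable {L R : Language α} {t t₁ t₂ w x z : List α} {f : Stream' α} {p : ℕ}

theorem reverse_append_eq_of_mul_le_palindromes (h : L * R ≤ Palindromes) (ht : t ∈ L)
    (hw : w ∈ R) : (t ++ w).reverse = t ++ w :=
  h (Language.mem_mul.2 ⟨t, ht, w, hw, rfl⟩)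

theorem prefix_of_mul_le_palindromes (h : L * R ≤ Palindromes)
    (hR : (R : Set (List α)).Infinite) (ht₁ : t₁ ∈ L) (ht₂ : t₂ ∈ L)
    (hle : t₁.length ≤ t₂.length) : t₁ <+: t₂ := by
  obtain ⟨w, hw, hlen⟩ := hR.exists_length_ge (N := t₂.length) (fun n => (t₂.take n).reverse)
      fun w hw hlt => by
        have := List.reverse_prefix_of_reverse_eq
          (reverse_append_eq_of_mul_le_palindromes h ht₂ hw) (by omega)
        rw [List.prefix_iff_eq_take, List.length_reverse] at this
        rw [← this, List.reverse_reverse]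
  exact List.prefix_of_prefix_length_le
    (List.prefix_reverse_of_reverse_eq (reverse_append_eq_of_mul_le_palindromes h ht₁ hw)
      (hle.trans hlen))
    (List.prefix_reverse_of_reverse_eq (reverse_append_eq_of_mul_le_palindromes h ht₂ hw) hlen)
    hle

theorem reverse_eq_take_cycle_of_mul_le_palindromes (h : L * R ≤ Palindromes) (hx : x ∈ L)
    (hy : x ++ z ∈ L) (hz : z ≠ []) (hw : w ∈ R) :
    w.reverse = (x ++ₛ Stream'.cycle z hz).take w.length := by
  have hxw := reverse_append_eq_of_mul_le_palindromes h hx hw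
  rcases le_total w.length x.length with hwx | hxw'
  · rw [Stream'.take_append_of_le_length _ _ _ hwx, ← List.length_reverse,
      ← List.prefix_iff_eq_take]
    exact List.reverse_prefix_of_reverse_eq hxw hwx
  obtain ⟨m, hm⟩ := List.prefix_reverse_of_reverse_eq hxw hxw'
  have hw' : w = m.reverse ++ x.reverse := by
    rw [← List.reverse_reverse w, ← hm, List.reverse_append]
  have hm_pal : m.reverse = m := by
    rw [hw', ← List.append_assoc, List.append_append_reverse_reverse_eq_iff] at hxw
    simpa using hxw.symm
  have hzm : (z ++ m).reverse = z ++ m := by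
    have hyw := reverse_append_eq_of_mul_le_palindromes h hy hw
    rw [hw', hm_pal, List.append_assoc x z, ← List.append_assoc z, ← List.append_assoc x] at hyw
    exact List.append_append_reverse_reverse_eq_iff.1 hyw
  calc w.reverse = x ++ m := hm.symm
    _ = x ++ (Stream'.cycle z hz).take m.length := by
      rw [← Stream'.eq_take_cycle_of_prefix_append hz
        (List.prefix_append_of_reverse_eq hm_pal hzm)]
    _ = _ := by rw [Stream'.append_take, ← List.length_append, hm, List.length_reverse]

theorem exists_mem_length_ge_of_reverse_eq_take (hR : (R : Set (List α)).Infinite)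
    (hRX : ∀ w ∈ R, w.reverse = (x ++ₛ f).take w.length) (N : ℕ) : ∃ w ∈ R, N ≤ w.length :=
  hR.exists_length_ge (fun n => ((x ++ₛ f).take n).reverse) fun w hw _ => by
    rw [← hRX w hw, List.reverse_reverse]

theorem eq_take_of_reverse_eq_take (h : L * R ≤ Palindromes) (hR : (R : Set (List α)).Infinite)
    (hRX : ∀ w ∈ R, w.reverse = (x ++ₛ f).take w.length) (ht : t ∈ L) :
    t = (x ++ₛ f).take t.length := by
  obtain ⟨w, hw, hlen⟩ := exists_mem_length_ge_of_reverse_eq_take hR hRX t.length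
  have := List.prefix_reverse_of_reverse_eq (reverse_append_eq_of_mul_le_palindromes h ht hw) hlen
  rwa [hRX w hw, List.prefix_iff_eq_take, Stream'.take_take, min_eq_right hlen] at this

theorem reverse_eq_take_drop_of_reverse_eq_take (h : L * R ≤ Palindromes)
    (hR : (R : Set (List α)).Infinite) (hRX : ∀ w ∈ R, w.reverse = (x ++ₛ f).take w.length)
    (ht : t ∈ L) (hw : w ∈ R) (hle : t.length ≤ w.length) :
    (((x ++ₛ f).drop t.length).take (w.length - t.length)).reverse =
      ((x ++ₛ f).drop t.length).take (w.length - t.length) := by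
  refine Stream'.reverse_eq_take_drop hle ?_
  rw [← eq_take_of_reverse_eq_take h hR hRX ht, ← hRX w hw, List.reverse_reverse]
  exact reverse_append_eq_of_mul_le_palindromes h ht hw

theorem dvd_length_sub_of_reverse_eq_take (h : L * R ≤ Palindromes)
    (hR : (R : Set (List α)).Infinite) (hRX : ∀ w ∈ R, w.reverse = (x ++ₛ f).take w.length)
    (hx : x ∈ L) (hp : Periodic f p) (hp0 : 0 < p) (hmin : ∀ q, 0 < q → Periodic f q → p ≤ q)
    (ht : t ∈ L) (hle : x.length ≤ t.length) : p ∣ t.length - x.length := by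
  obtain ⟨w, hw, hlen⟩ := exists_mem_length_ge_of_reverse_eq_take hR hRX (t.length + p)
  obtain ⟨e, he⟩ := Nat.exists_eq_add_of_le hle
  have hfx := reverse_eq_take_drop_of_reverse_eq_take h hR hRX hx hw (by omega)
  have hft := reverse_eq_take_drop_of_reverse_eq_take h hR hRX ht hw (by omega)
  rw [Stream'.drop_append_stream, show w.length - x.length = e + (w.length - t.length) by omega]
    at hfx
  rw [he, ← Stream'.drop_drop, Stream'.drop_append_stream, ← he] at hft
  rw [he, Nat.add_sub_cancel_left]
  exact hp.dvd_of_forall_lt hp0 hmin fun i hi =>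
    Stream'.get_add_eq_of_reverse_eq hfx hft i (by omega)

end PalindromicProduct

section Cover

variable {L R : Language α} {f : Stream' α} {p : ℕ}

theorem exists_finite_forall_mem_singleton_mul_kstar (hp : Periodic f p) (x : List α)
    (hLX : ∀ t ∈ L, t = (x ++ₛ f).take t.length)
    (hdvd : ∀ t ∈ L, x.length ≤ t.length → p ∣ t.length - x.length) :
    ∃ S : Set (List α × List α), S.Finite ∧
      ∀ t ∈ L, ∃ q ∈ S, t ∈ ({q.1} : Language α) * {q.2}∗ := by
  refine ⟨insert (x, f.take p) ((fun a => ((x ++ₛ f).take a, [])) '' Set.Iio x.length),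
    ((Set.finite_Iio _).image _).insert _, fun t ht => ?_⟩
  rcases lt_or_ge t.length x.length with hlt | hle
  · refine ⟨_, Set.mem_insert_of_mem _ ⟨t.length, hlt, rfl⟩, ?_⟩
    simpa [← hLX t ht] using Language.append_flatten_replicate_mem t [] 0
  · obtain ⟨i, hi⟩ := hdvd t ht hle
    refine ⟨_, Set.mem_insert _ _, ?_⟩
    rw [hLX t ht, ← Nat.add_sub_cancel' hle, ← Stream'.append_take, hi, ← add_zero (p * i),
      Stream'.take_mul_add_of_periodic hp, Stream'.take_zero, List.append_nil]
    exact Language.append_flatten_replicate_mem _ _ _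

theorem exists_finite_forall_mem_kstar_mul_singleton (hp : Periodic f p) (hp0 : 0 < p)
    (x : List α) (hRX : ∀ w ∈ R, w.reverse = (x ++ₛ f).take w.length)
    (hpal : ∀ w ∈ R, x.length ≤ w.length →
      (f.take (w.length - x.length)).reverse = f.take (w.length - x.length)) :
    ∃ T : Set (List α × List α), T.Finite ∧
      ∀ w ∈ R, ∃ q ∈ T, w ∈ ({q.1} : Language α)∗ * {q.2} := by
  refine ⟨(fun r => (f.take p, f.take r ++ x.reverse)) '' Set.Iio p ∪
    (fun n => ([], ((x ++ₛ f).take n).reverse)) '' Set.Iio x.length,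
    ((Set.finite_Iio _).image _).union ((Set.finite_Iio _).image _), fun w hw => ?_⟩
  have hw' : w = ((x ++ₛ f).take w.length).reverse := by rw [← hRX w hw, List.reverse_reverse]
  rcases lt_or_ge w.length x.length with hlt | hle
  · refine ⟨_, Or.inr ⟨w.length, hlt, rfl⟩, ?_⟩
    simpa [← hw'] using Language.flatten_replicate_append_mem [] w 0
  · obtain ⟨n, hn⟩ := Nat.exists_eq_add_of_le hle
    have hfn := hpal w hw hle
    rw [hn, Nat.add_sub_cancel_left] at hfn
    have hwn :
        w = (List.replicate (n / p) (f.take p)).flatten ++ (f.take (n % p) ++ x.reverse) := by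
      rw [hw', hn, ← Stream'.append_take, List.reverse_append, hfn, ← List.append_assoc,
        ← Stream'.take_mul_add_of_periodic hp, Nat.div_add_mod]
    exact ⟨_, Or.inl ⟨n % p, Nat.mod_lt _ hp0, rfl⟩,
      hwn ▸ Language.flatten_replicate_append_mem _ _ _⟩

end Cover

theorem exists_fin_cover_of_reverse_eq_take {L R : Language α} {x : List α} {f : Stream' α}
    {d : ℕ} (h : L * R ≤ Palindromes) (hR : (R : Set (List α)).Infinite) (hx : x ∈ L)
    (hd : 0 < d) (hfd : Periodic f d) (hRX : ∀ w ∈ R, w.reverse = (x ++ₛ f).take w.length) :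
    ∃ (k : ℕ) (u : Fin k → Fin 4 → List α),
      L * R ≤ ⨆ j : Fin k, {u j 0} * {u j 1}∗ * {u j 2}∗ * {u j 3} := by
  classical
  have hper : ∃ p, 0 < p ∧ Periodic f p := ⟨d, hd, hfd⟩
  obtain ⟨hp0, hp⟩ := Nat.find_spec hper
  have hmin : ∀ q, 0 < q → Periodic f q → Nat.find hper ≤ q := fun q hq hfq =>
    Nat.find_min' hper ⟨hq, hfq⟩
  have hpal : ∀ w ∈ R, x.length ≤ w.length →
      (f.take (w.length - x.length)).reverse = f.take (w.length - x.length) := fun w hw hle => by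
    simpa [Stream'.drop_append_stream] using
      reverse_eq_take_drop_of_reverse_eq_take h hR hRX hx hw hle
  obtain ⟨S, hS, hLS⟩ := exists_finite_forall_mem_singleton_mul_kstar hp x
    (fun t ht => eq_take_of_reverse_eq_take h hR hRX ht)
    (fun t ht => dvd_length_sub_of_reverse_eq_take h hR hRX hx hp hp0 hmin ht)
  obtain ⟨T, hT, hRT⟩ := exists_finite_forall_mem_kstar_mul_singleton hp hp0 x hRX hpal
  exact Language.exists_fin_mul_le_iSup hS hT hLS hRT

end

/-- If `L * R ⊆ Palindromes`, `L` has at least two distinct words and `R` is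
infinite, then `L * R` is covered by a finite union of languages of the form
`{u₀} ({u₁})^* ({u₂})^* {u₃}`. -/
theorem stmt_3 {α : Type*} (L R : Language α)
    (hsub : L * R ≤ Palindromes)
    (hL : ∃ u ∈ L, ∃ v ∈ L, u ≠ v)
    (hR : Set.Infinite (R : Set (List α))) :
    ∃ (k : ℕ) (u : Fin k → Fin 4 → List α),
      L * R ≤ ⨆ j : Fin k,
        ({u j 0} : Language α) * KStar.kstar ({u j 1} : Language α) *
          KStar.kstar ({u j 2} : Language α) * ({u j 3} : Language α) := by
  obtain ⟨u, hu, v, hv, huv⟩ := hL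
  obtain ⟨x, hx, z, hxz, hz⟩ : ∃ x ∈ L, ∃ z, x ++ z ∈ L ∧ z ≠ [] := by
    rcases le_total u.length v.length with hle | hle
    · obtain ⟨z, rfl⟩ := prefix_of_mul_le_palindromes hsub hR hu hv hle
      exact ⟨u, hu, z, hv, by simpa using huv⟩
    · obtain ⟨z, rfl⟩ := prefix_of_mul_le_palindromes hsub hR hv hu hle
      exact ⟨v, hv, z, hu, by simpa using huv.symm⟩
  exact exists_fin_cover_of_reverse_eq_take hsub hR hx (List.length_pos_iff.2 hz)
    (Stream'.periodic_cycle z hz)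
    fun w hw => reverse_eq_take_cycle_of_mul_le_palindromes hsub hx hxz hz hw
end

section
/- Let Σ be an alphabet with at least two distinct elements. Let J be a finite index set and, for each j ∈ J, let u_{j,0}, u_{j,1}, u_{j,2}, u_{j,3} be words over Σ; set L := ⋃_{j∈J} {u_{j,0}} * ({u_{j,1}})* * ({u_{j,2}})* * {u_{j,3}}. Then there exists a word w over Σ that is not a prefix of any word in L. -/
/-!
Counting prefixes of length `n`. Only the first `n` letters of `u₀ u₁ᵃ u₂ᵇ u₃` matter, so `a` and
`b` may be capped at `n`: the words of `L` have at most `k (n + 1)²` distinct prefixes of length `n`.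
Two distinct letters give `2ⁿ` words of length `n`, and `k (n + 1)² < 2ⁿ` for large `n`.
-/

open List

theorem Language.mem_kstar_singleton_iff {α : Type*} {v x : List α} :
    x ∈ KStar.kstar ({v} : Language α) ↔ ∃ m, x = (replicate m v).flatten := by
  rw [Language.mem_kstar]
  constructor
  · rintro ⟨L, rfl, hL⟩
    exact ⟨L.length, by rw [← eq_replicate_iff.2 ⟨rfl, hL⟩]⟩
  · rintro ⟨m, rfl⟩
    exact ⟨replicate m v, rfl, fun y hy => eq_of_mem_replicate hy⟩

theorem List.take_append_flatten_replicate_min {α : Type*} (X v Y : List α) (m n : ℕ) :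
    (X ++ (replicate m v).flatten ++ Y).take n
      = (X ++ (replicate (min m n) v).flatten ++ Y).take n := by
  rcases le_or_gt m n with hmn | hnm
  · rw [min_eq_left hmn]
  rcases eq_or_ne v [] with rfl | hv
  · simp only [flatten_replicate_nil]
  have hlong : n ≤ (X ++ (replicate n v).flatten).length := by
    simpa using le_add_left (Nat.le_mul_of_pos_right n (length_pos_iff.2 hv))
  have hsplit : replicate m v = replicate n v ++ replicate (m - n) v := by
    rw [← replicate_add]; congr 1; omega
  rw [min_eq_right hnm.le, hsplit, flatten_append]
  simp only [append_assoc]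
  rw [← append_assoc X, take_append_of_le_length hlong, ← append_assoc X,
    take_append_of_le_length hlong]

theorem exists_take_eq_of_mem_mul_kstar_mul_kstar_mul {α : Type*} {u₀ u₁ u₂ u₃ x : List α}
    (hx : x ∈ ({u₀} : Language α) * KStar.kstar {u₁} * KStar.kstar {u₂} * {u₃}) (n : ℕ) :
    ∃ a ≤ n, ∃ b ≤ n,
      x.take n = (u₀ ++ (replicate a u₁).flatten ++ (replicate b u₂).flatten ++ u₃).take n := by
  obtain ⟨_, ⟨_, ⟨w₀, h₀, w₁, h₁, rfl⟩, w₂, h₂, rfl⟩, w₃, h₃, rfl⟩ := hx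
  replace h₀ : w₀ = u₀ := h₀
  replace h₃ : w₃ = u₃ := h₃
  subst w₀ w₃
  obtain ⟨m₁, rfl⟩ := Language.mem_kstar_singleton_iff.1 h₁
  obtain ⟨m₂, rfl⟩ := Language.mem_kstar_singleton_iff.1 h₂
  refine ⟨min m₁ n, min_le_right _ _, min m₂ n, min_le_right _ _, ?_⟩
  calc _ = (u₀ ++ (replicate m₁ u₁).flatten ++ (replicate (min m₂ n) u₂).flatten ++ u₃).take n :=
        take_append_flatten_replicate_min _ u₂ u₃ m₂ n
    _ = _ := by
        simpa only [append_assoc] using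
          take_append_flatten_replicate_min u₀ u₁ ((replicate (min m₂ n) u₂).flatten ++ u₃) m₁ n

theorem exists_mul_sq_lt_two_pow (c : ℕ) : ∃ n, c * (n + 1) ^ 2 < 2 ^ n := by
  obtain ⟨m, hcm, hm⟩ : ∃ m, c ≤ m ∧ 26 ≤ m := ⟨c + 26, by omega, by omega⟩
  refine ⟨4 * m, ?_⟩
  calc c * (4 * m + 1) ^ 2 ≤ m * (5 * m) ^ 2 := by gcongr; omega
    _ = 25 * m ^ 3 := by ring
    _ < m * m ^ 3 := by gcongr; omega
    _ = m ^ 4 := by ring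
    _ < (2 ^ m) ^ 4 := by gcongr; exact Nat.lt_two_pow_self
    _ = 2 ^ (4 * m) := by rw [← pow_mul, mul_comm]

theorem exists_length_eq_notMem_of_card_lt_two_pow {α : Type*} {a b : α} (hab : a ≠ b)
    {F : Finset (List α)} {n : ℕ} (hF : F.card < 2 ^ n) : ∃ w : List α, w.length = n ∧ w ∉ F := by
  classical
  let word : (Fin n → Bool) → List α := fun v => ofFn fun i => cond (v i) a b
  have hletter : Function.Injective fun x : Bool => cond x a b := by
    intro x y; cases x <;> cases y <;> simp [hab, hab.symm]
  have hword : Function.Injective word := ofFn_injective.comp hletter.comp_left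
  obtain ⟨w, hw, hwF⟩ := Finset.exists_mem_notMem_of_card_lt_card (s := F)
    (t := Finset.univ.image word) (by simpa [Finset.card_image_of_injective _ hword] using hF)
  obtain ⟨v, -, rfl⟩ := Finset.mem_image.1 hw
  exact ⟨word v, length_ofFn, hwF⟩

/-- Over an alphabet with at least two letters, for any finite union
`L = ⋃_j {u_{j,0}} ({u_{j,1}})^* ({u_{j,2}})^* {u_{j,3}}`, there is a word that
is not a prefix of any word in `L`. -/
theorem stmt_4 {α : Type*} (hα : ∃ a b : α, a ≠ b)
    (k : ℕ) (u : Fin k → Fin 4 → List α) :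
    ∃ w : List α,
      ∀ x ∈ (⨆ j : Fin k,
        ({u j 0} : Language α) * KStar.kstar ({u j 1} : Language α) *
          KStar.kstar ({u j 2} : Language α) * ({u j 3} : Language α)),
        ¬ w <+: x := by
  classical
  obtain ⟨a, b, hab⟩ := hα
  obtain ⟨n, hn⟩ := exists_mul_sq_lt_two_pow k
  let prefixes : Finset (List α) :=
    Finset.univ.image fun p : Fin k × Fin (n + 1) × Fin (n + 1) =>
      (u p.1 0 ++ (replicate p.2.1 (u p.1 1)).flatten ++ (replicate p.2.2 (u p.1 2)).flatten
        ++ u p.1 3).take n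
  have hcard : prefixes.card < 2 ^ n :=
    Finset.card_image_le.trans_lt (by simpa [sq, mul_assoc] using hn)
  obtain ⟨w, hwlen, hw⟩ := exists_length_eq_notMem_of_card_lt_two_pow hab hcard
  refine ⟨w, fun x hx hwx => hw ?_⟩
  obtain ⟨j, hj⟩ := Language.mem_iSup.1 hx
  obtain ⟨i₁, hi₁, i₂, hi₂, htake⟩ := exists_take_eq_of_mem_mul_kstar_mul_kstar_mul hj n
  rw [prefix_iff_eq_take, hwlen, htake] at hwx
  exact Finset.mem_image.2 ⟨(j, ⟨i₁, by omega⟩, ⟨i₂, by omega⟩), Finset.mem_univ _, hwx.symm⟩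
end

section
/- Let I be a finite index set. For each i ∈ I let α_i be a finite conjunction of ε-free AG-formulas and let (ε_{i,j})_{j∈J_i} be a finite family of ε-free EF-formulas (J_i finite). Let ψ := ⋁_{i∈I}(α_i ∧ ⋀_{j∈J_i} ε_{i,j}) and Ψ := {ε_{i,j} | i ∈ I, j ∈ J_i}. Assume: (completeness) for every subset Ψ' ⊆ Ψ, if the conjunction ⋀Ψ' semantically implies ψ, then there exists i ∈ I such that α_i is a tautology and {ε_{i,j} | j ∈ J_i} ⊆ Ψ'; and (structural monotonicity) every extension of a structure satisfying ψ also satisfies ψ. Then ψ is equivalent to ψ' := ⋁_{i ∈ I such that α_i is a tautology} ⋀_{j∈J_i} ε_{i,j}. -/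
namespace PDL

/-- Test-free PDL formulas (without atomic propositions) over the alphabet `α`:
`⊥`, `⊤`, disjunction, conjunction, and `EF^L`/`AG^L` for languages `L ⊆ α*`. -/
inductive Formula (α : Type) : Type where
  | bot : Formula α
  | top : Formula α
  | or  : Formula α → Formula α → Formula α
  | and : Formula α → Formula α → Formula α
  | EF  : Set (List α) → Formula α → Formula α
  | AG  : Set (List α) → Formula α → Formula α

/-- `Path tr s w t` : there is a finite path from `s` to `t` along the
transition relation `tr` whose labels read the word `w`. -/
inductive Path {σ α : Type} (tr : σ → α → σ → Prop) : σ → List α → σ → Prop where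
  | nil (s : σ) : Path tr s [] s
  | cons {s t u : σ} {a : α} {w : List α} :
      tr s a t → Path tr t w u → Path tr s (a :: w) u

/-- Satisfaction of a formula at a state of a labeled transition system. -/
def Sat {σ α : Type} (tr : σ → α → σ → Prop) (s : σ) : Formula α → Prop
  | .bot => False
  | .top => True
  | .or φ ψ => Sat tr s φ ∨ Sat tr s ψ
  | .and φ ψ => Sat tr s φ ∧ Sat tr s ψ
  | .EF L φ => ∃ w t, Path tr s w t ∧ w ∈ L ∧ Sat tr t φ
  | .AG L φ => ∀ w t, Path tr s w t → w ∈ L → Sat tr t φ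

/-- A structure: a pointed labeled transition system. -/
structure Struct (α : Type) : Type 1 where
  S : Type
  tr : S → α → S → Prop
  root : S

/-- A structure satisfies a formula iff its root does. -/
def SatS {α : Type} (M : Struct α) (φ : Formula α) : Prop := Sat M.tr M.root φ

/-- Two formulas are equivalent iff exactly the same structures satisfy them. -/
def FEquiv {α : Type} (φ ψ : Formula α) : Prop := ∀ M : Struct α, SatS M φ ↔ SatS M ψ

/-- A formula is a tautology iff every structure satisfies it. -/
def Tautology {α : Type} (φ : Formula α) : Prop := ∀ M : Struct α, SatS M φ

/-- `φ` semantically implies `ψ`. -/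
def SemImplies {α : Type} (φ ψ : Formula α) : Prop := ∀ M : Struct α, SatS M φ → SatS M ψ

/-- A formula is ε-free iff the empty word lies in no language annotating an
`EF`/`AG` operator occurring in it. -/
def EpsFree {α : Type} : Formula α → Prop
  | .bot => True
  | .top => True
  | .or φ ψ => EpsFree φ ∧ EpsFree ψ
  | .and φ ψ => EpsFree φ ∧ EpsFree ψ
  | .EF L φ => [] ∉ L ∧ EpsFree φ
  | .AG L φ => [] ∉ L ∧ EpsFree φ

/-- Finite disjunction of a list of formulas. -/
def bigOr {α : Type} : List (Formula α) → Formula α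
  | [] => .bot
  | φ :: l => .or φ (bigOr l)

/-- Finite conjunction of a list of formulas. -/
def bigAnd {α : Type} : List (Formula α) → Formula α
  | [] => .top
  | φ :: l => .and φ (bigAnd l)

/-- `M'` extends `M`: the states of `M` embed into those of `M'`, preserving
the root and the transitions. -/
def Extends {α : Type} (M M' : Struct α) : Prop :=
  ∃ i : M.S → M'.S, Function.Injective i ∧ i M.root = M'.root ∧
    ∀ s a t, M.tr s a t → M'.tr (i s) a (i t)

/-- The linear structure `π_w` for a word `w`: states `0, …, |w|`, root `0`,
and a transition `i →^c i+1` where `c` is the `(i+1)`-st letter of `w`. -/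
def pathStruct {α : Type} (w : List α) : Struct α where
  S := Fin (w.length + 1)
  tr := fun i a j => ∃ h : (i : ℕ) < w.length, w.get ⟨i, h⟩ = a ∧ (j : ℕ) = (i : ℕ) + 1
  root := ⟨0, Nat.succ_pos _⟩

/-- `Lang φ` (relative to the designated letter `dollar`): the set of
`$`-free words `w` such that `π_{w ++ [$]}` satisfies `φ`. -/
def Lang {α : Type} (dollar : α) (φ : Formula α) : Set (List α) :=
  {w | dollar ∉ w ∧ SatS (pathStruct (w ++ [dollar])) φ}

open scoped Classical

section Aux

variable {σ σ' α : Type}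

/-- `f` maps `σ` onto a "closed copy" inside `σ'`. -/
def IsCopy (tr : σ → α → σ → Prop) (tr' : σ' → α → σ' → Prop) (f : σ → σ') : Prop :=
  (∀ s a t, tr s a t → tr' (f s) a (f t)) ∧
  (∀ s a x, tr' (f s) a x → ∃ t, tr s a t ∧ x = f t)

lemma path_copy {tr : σ → α → σ → Prop} {tr' : σ' → α → σ' → Prop} {f : σ → σ'}
    (h : IsCopy tr tr' f) {s w t} (p : Path tr s w t) : Path tr' (f s) w (f t) := by
  induction p with
  | nil => exact .nil _
  | cons h1 _ ih => exact .cons (h.1 _ _ _ h1) ih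

lemma path_copy_rev {tr : σ → α → σ → Prop} {tr' : σ' → α → σ' → Prop} {f : σ → σ'}
    (h : IsCopy tr tr' f) :
    ∀ {w : List α} {s : σ} {x : σ'}, Path tr' (f s) w x → ∃ t, Path tr s w t ∧ x = f t := by
  intro w
  induction w with
  | nil =>
    intro s x p
    cases p
    exact ⟨s, .nil _, rfl⟩
  | cons a w ih =>
    intro s x p
    cases p with
    | cons h1 p' =>
      obtain ⟨t₀, ht₀, rfl⟩ := h.2 _ _ _ h1
      obtain ⟨t, pt, rfl⟩ := ih p'
      exact ⟨t, .cons ht₀ pt, rfl⟩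

lemma sat_copy {tr : σ → α → σ → Prop} {tr' : σ' → α → σ' → Prop} {f : σ → σ'}
    (h : IsCopy tr tr' f) :
    ∀ (φ : Formula α) (s : σ), Sat tr' (f s) φ ↔ Sat tr s φ := by
  intro φ
  induction φ with
  | bot => intro s; simp [Sat]
  | top => intro s; simp [Sat]
  | or φ ψ ih1 ih2 => intro s; simp only [Sat]; rw [ih1 s, ih2 s]
  | and φ ψ ih1 ih2 => intro s; simp only [Sat]; rw [ih1 s, ih2 s]
  | EF L φ ih =>
    intro s
    constructor
    · rintro ⟨w, x, p, hw, hx⟩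
      obtain ⟨t, pt, rfl⟩ := path_copy_rev h p
      exact ⟨w, t, pt, hw, (ih t).mp hx⟩
    · rintro ⟨w, t, p, hw, ht⟩
      exact ⟨w, f t, path_copy h p, hw, (ih t).mpr ht⟩
  | AG L φ ih =>
    intro s
    constructor
    · intro hs w t p hw
      exact (ih t).mp (hs w (f t) (path_copy h p) hw)
    · intro hs w x p hw
      obtain ⟨t, pt, rfl⟩ := path_copy_rev h p
      exact (ih t).mpr (hs w t pt hw)

/-- Root duplication: add a fresh root `none` copying the outgoing
transitions of `root`, with no incoming transitions. -/
def plusTr (tr : σ → α → σ → Prop) (root : σ) : Option σ → α → Option σ → Prop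
  | none, a, some t => tr root a t
  | some s, a, some t => tr s a t
  | _, _, none => False

lemma copy_plus {tr : σ → α → σ → Prop} {root : σ} : IsCopy tr (plusTr tr root) some := by
  refine ⟨fun s a t h => h, fun s a x h => ?_⟩
  cases x with
  | none => exact h.elim
  | some t => exact ⟨t, h, rfl⟩

lemma plus_path {tr : σ → α → σ → Prop} {root : σ} {w : List α} {x : Option σ}
    (p : Path (plusTr tr root) none w x) :
    (w = [] ∧ x = none) ∨ ∃ t, Path tr root w t ∧ w ≠ [] ∧ x = some t := by
  cases p with
  | nil => exact Or.inl ⟨rfl, rfl⟩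
  | @cons _ y _ a w' h1 p' =>
    cases y with
    | none => exact h1.elim
    | some t₀ =>
      obtain ⟨t, pt, rfl⟩ := path_copy_rev copy_plus p'
      exact Or.inr ⟨t, .cons h1 pt, by simp, rfl⟩

lemma plus_path_lift {tr : σ → α → σ → Prop} {root : σ} {w : List α} {t : σ}
    (p : Path tr root w t) (hw : w ≠ []) : Path (plusTr tr root) none w (some t) := by
  cases p with
  | nil => exact absurd rfl hw
  | cons h1 p' => exact .cons (show plusTr tr root none _ (some _) from h1) (path_copy copy_plus p')

lemma plus_sat {tr : σ → α → σ → Prop} {root : σ} :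
    ∀ φ : Formula α, Sat (plusTr tr root) none φ ↔ Sat tr root φ := by
  intro φ
  induction φ with
  | bot => simp [Sat]
  | top => simp [Sat]
  | or _ _ ih1 ih2 => simp only [Sat]; rw [ih1, ih2]
  | and _ _ ih1 ih2 => simp only [Sat]; rw [ih1, ih2]
  | EF L φ ih =>
    constructor
    · rintro ⟨w, x, p, hw, hx⟩
      rcases plus_path p with ⟨rfl, rfl⟩ | ⟨t, pt, -, rfl⟩
      · exact ⟨[], root, .nil _, hw, ih.mp hx⟩
      · exact ⟨w, t, pt, hw, (sat_copy copy_plus φ t).mp hx⟩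
    · rintro ⟨w, t, p, hw, ht⟩
      by_cases hw0 : w = []
      · subst hw0; cases p; exact ⟨[], none, .nil _, hw, ih.mpr ht⟩
      · exact ⟨w, some t, plus_path_lift p hw0, hw, (sat_copy copy_plus φ t).mpr ht⟩
  | AG L φ ih =>
    constructor
    · intro hs w t p hw
      by_cases hw0 : w = []
      · subst hw0; cases p; exact ih.mp (hs [] none (.nil _) hw)
      · exact (sat_copy copy_plus φ t).mp (hs w (some t) (plus_path_lift p hw0) hw)
    · intro hs w x p hw
      rcases plus_path p with ⟨rfl, rfl⟩ | ⟨t, pt, -, rfl⟩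
      · exact ih.mpr (hs [] root (.nil _) hw)
      · exact (sat_copy copy_plus φ t).mpr (hs w t pt hw)

/-- Glue two structures below a fresh common root. -/
def glueTr (trN : σ → α → σ → Prop) (rN : σ) (trM : σ' → α → σ' → Prop) (rM : σ') :
    Option (σ ⊕ σ') → α → Option (σ ⊕ σ') → Prop
  | none, a, some (.inl t) => trN rN a t
  | none, a, some (.inr t) => trM rM a t
  | some (.inl s), a, some (.inl t) => trN s a t
  | some (.inr s), a, some (.inr t) => trM s a t
  | _, _, _ => False

variable {trN : σ → α → σ → Prop} {rN : σ} {trM : σ' → α → σ' → Prop} {rM : σ'}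

lemma copy_glue_left : IsCopy trN (glueTr trN rN trM rM) (fun s => some (Sum.inl s)) := by
  refine ⟨fun s a t h => h, fun s a x h => ?_⟩
  match x with
  | none => exact h.elim
  | some (.inl t) => exact ⟨t, h, rfl⟩
  | some (.inr t) => exact h.elim

lemma copy_glue_right : IsCopy trM (glueTr trN rN trM rM) (fun s => some (Sum.inr s)) := by
  refine ⟨fun s a t h => h, fun s a x h => ?_⟩
  match x with
  | none => exact h.elim
  | some (.inl t) => exact h.elim
  | some (.inr t) => exact ⟨t, h, rfl⟩

lemma glue_path {w : List α} {x : Option (σ ⊕ σ')}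
    (p : Path (glueTr trN rN trM rM) none w x) :
    (w = [] ∧ x = none) ∨ (∃ t, Path trN rN w t ∧ x = some (.inl t)) ∨
      (∃ t, Path trM rM w t ∧ x = some (.inr t)) := by
  cases p with
  | nil => exact Or.inl ⟨rfl, rfl⟩
  | @cons _ y _ a w' h1 p' =>
    match y, h1 with
    | some (.inl t₀), h1 =>
      obtain ⟨t, pt, rfl⟩ := path_copy_rev copy_glue_left p'
      exact Or.inr (Or.inl ⟨t, .cons h1 pt, rfl⟩)
    | some (.inr t₀), h1 =>
      obtain ⟨t, pt, rfl⟩ := path_copy_rev copy_glue_right p'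
      exact Or.inr (Or.inr ⟨t, .cons h1 pt, rfl⟩)

lemma glue_lift_left {w : List α} {t : σ} (p : Path trN rN w t) (hw : w ≠ []) :
    Path (glueTr trN rN trM rM) none w (some (.inl t)) := by
  cases p with
  | nil => exact absurd rfl hw
  | cons h1 p' =>
    exact .cons (show glueTr trN rN trM rM none _ (some (.inl _)) from h1)
      (path_copy copy_glue_left p')

lemma sat_bigOr {tr : σ → α → σ → Prop} {s : σ} :
    ∀ l : List (Formula α), Sat tr s (bigOr l) ↔ ∃ φ ∈ l, Sat tr s φ
  | [] => by simp [bigOr, Sat]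
  | φ :: l => by
    simp only [bigOr, Sat, sat_bigOr l, List.mem_cons]
    constructor
    · rintro (h | ⟨χ, hχ, h⟩)
      · exact ⟨φ, Or.inl rfl, h⟩
      · exact ⟨χ, Or.inr hχ, h⟩
    · rintro ⟨χ, rfl | hχ, h⟩
      · exact Or.inl h
      · exact Or.inr ⟨χ, hχ, h⟩

lemma sat_bigAnd {tr : σ → α → σ → Prop} {s : σ} :
    ∀ l : List (Formula α), Sat tr s (bigAnd l) ↔ ∀ φ ∈ l, Sat tr s φ
  | [] => by simp [bigAnd, Sat]
  | φ :: l => by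
    simp only [bigAnd, Sat, sat_bigAnd l, List.mem_cons]
    constructor
    · rintro ⟨h1, h2⟩ χ (rfl | hχ)
      · exact h1
      · exact h2 χ hχ
    · intro h
      exact ⟨h φ (Or.inl rfl), fun χ hχ => h χ (Or.inr hχ)⟩

end Aux

/-- Elimination of outermost `AG`-formulas: if
`ψ = ⋁_{i}(α_i ∧ ⋀_j ε_{i,j})` with the `α_i` conjunctions of ε-free
`AG`-formulas and the `ε_{i,j}` ε-free `EF`-formulas, `ψ` is complete and
structurally monotone, then `ψ` is equivalent to
`ψ' = ⋁_{i : ⊨ α_i} ⋀_j ε_{i,j}`. -/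
theorem stmt_10 {α : Type} {m : ℕ}
    (A E : Fin m → List (Formula α))
    (hA : ∀ i, ∀ χ ∈ A i, EpsFree χ ∧ ∃ K φ', χ = Formula.AG K φ')
    (hE : ∀ i, ∀ χ ∈ E i, EpsFree χ ∧ ∃ K φ', χ = Formula.EF K φ')
    (ψ : Formula α)
    (hψ : ψ = bigOr ((List.finRange m).map fun i =>
      Formula.and (bigAnd (A i)) (bigAnd (E i))))
    (hcomplete : ∀ Ψ' : List (Formula α), (∀ χ ∈ Ψ', ∃ i, χ ∈ E i) →
      SemImplies (bigAnd Ψ') ψ →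
      ∃ i, Tautology (bigAnd (A i)) ∧ ∀ χ ∈ E i, χ ∈ Ψ')
    (hmono : ∀ M M' : Struct α, Extends M M' → SatS M ψ → SatS M' ψ) :
    FEquiv ψ (bigOr (((List.finRange m).filter
      (fun i => decide (Tautology (bigAnd (A i))))).map fun i => bigAnd (E i))) := by
  intro M
  constructor
  · -- hard direction: ψ → ψ'
    intro hM
    set Ψ' : List (Formula α) :=
      ((List.finRange m).flatMap E).filter (fun χ => decide (SatS M χ)) with hΨ'
    have hmem : ∀ χ, χ ∈ Ψ' ↔ (∃ i, χ ∈ E i) ∧ SatS M χ := by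
      intro χ
      simp [hΨ', List.mem_filter, List.mem_flatMap]
    have hsem : SemImplies (bigAnd Ψ') ψ := by
      intro N hN
      have hN' : ∀ χ ∈ Ψ', Sat N.tr N.root χ := (sat_bigAnd _).mp hN
      -- glue N and M below a fresh root
      set P : Struct α := ⟨Option (N.S ⊕ M.S), glueTr N.tr N.root M.tr M.root, none⟩ with hP
      have hPψ : SatS P ψ := by
        apply hmono ⟨Option M.S, plusTr M.tr M.root, none⟩ P
        · refine ⟨fun x => x.map Sum.inr, Option.map_injective Sum.inr_injective, rfl, ?_⟩
          intro s a t h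
          cases s <;> cases t <;> first | exact h.elim | exact h
        · exact (plus_sat ψ).mpr hM
      rw [hψ] at hPψ
      obtain ⟨φ, hφmem, hφ⟩ := (sat_bigOr _).mp hPψ
      obtain ⟨i, -, rfl⟩ := List.mem_map.mp hφmem
      obtain ⟨hPA, hPE⟩ := hφ
      show Sat N.tr N.root ψ
      rw [hψ]
      apply (sat_bigOr _).mpr
      refine ⟨_, List.mem_map.mpr ⟨i, List.mem_finRange i, rfl⟩, ?_, ?_⟩
      · -- N satisfies the AG-part α_i
        apply (sat_bigAnd _).mpr
        intro χ hχ
        obtain ⟨hef, K, φ', rfl⟩ := hA i χ hχ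
        have hK : [] ∉ K := hef.1
        have hAGP : Sat P.tr none (Formula.AG K φ') := (sat_bigAnd _).mp hPA _ hχ
        intro w t p hw
        have hw0 : w ≠ [] := fun h => hK (h ▸ hw)
        exact (sat_copy copy_glue_left φ' t).mp (hAGP w _ (glue_lift_left p hw0) hw)
      · -- N satisfies the EF-part ⋀_j ε_{i,j}
        apply (sat_bigAnd _).mpr
        intro χ hχ
        obtain ⟨hef, K, φ', rfl⟩ := hE i χ hχ
        have hK : [] ∉ K := hef.1
        obtain ⟨w, x, p, hw, hx⟩ := (sat_bigAnd _).mp hPE _ hχ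
        rcases glue_path p with ⟨rfl, -⟩ | ⟨t, pt, rfl⟩ | ⟨t, pt, rfl⟩
        · exact absurd hw hK
        · exact ⟨w, t, pt, hw, (sat_copy copy_glue_left φ' t).mp hx⟩
        · -- the witness lives in the M-part: then ε_{i,j} ∈ Ψ', so N satisfies it
          have hMχ : SatS M (Formula.EF K φ') :=
            ⟨w, t, pt, hw, (sat_copy copy_glue_right φ' t).mp hx⟩
          exact hN' _ ((hmem _).mpr ⟨⟨i, hχ⟩, hMχ⟩)
    obtain ⟨i, htaut, hsub⟩ := hcomplete Ψ' (fun χ hχ => ((hmem χ).mp hχ).1) hsem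
    apply (sat_bigOr _).mpr
    refine ⟨bigAnd (E i), ?_, ?_⟩
    · exact List.mem_map.mpr ⟨i,
        List.mem_filter.mpr ⟨List.mem_finRange i, by simpa using htaut⟩, rfl⟩
    · exact (sat_bigAnd _).mpr (fun χ hχ => ((hmem χ).mp (hsub χ hχ)).2)
  · -- easy direction: ψ' → ψ
    intro hM'
    obtain ⟨φ, hφmem, hφ⟩ := (sat_bigOr _).mp hM'
    obtain ⟨i, hi, rfl⟩ := List.mem_map.mp hφmem
    have htaut : Tautology (bigAnd (A i)) := by
      have := (List.mem_filter.mp hi).2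
      simpa using this
    show Sat M.tr M.root ψ
    rw [hψ]
    apply (sat_bigOr _).mpr
    exact ⟨_, List.mem_map.mpr ⟨i, List.mem_finRange i, rfl⟩, htaut M, hφ⟩

end PDL
end

section
/- Let L₀ be a language over Σ, let L be a language of $-free words, let δ be a test-free PDL formula, and let ψ be a satisfiable test-free PDL formula. Define L₁ := {w ∈ L₀ | w is $-free} and L₂ := {u ++ [$] | u is $-free and u ++ [$] is a prefix of some word in L₀}. If EF^{L·{$}} ⊤ is equivalent to δ ∨ EF^{L₀} ψ, then δ ∨ EF^{L₀} ψ is equivalent to δ ∨ EF^{L₁} ψ ∨ EF^{L₂} ⊤. -/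
namespace PDL

/-! A witness of `EF^{L₀} ψ` is split at its first `$`, if any. Conversely, if `M` reaches, along
`u`, a state `s` with a `$`-successor, where `u ++ [$]` is a prefix of some `u ++ $ :: v ∈ L₀`,
graft onto `M` a fresh path labelled `$ :: v` from `s` to the root of a model of `ψ`. The grafted
structure satisfies `EF^{L₀} ψ`, hence `EF^{L·{$}} ⊤`. The witnessing path reads a `$`-free word
and then `$`, so it stays inside `M` up to its last step, and that step is a `$`-transition of `M`
or the new edge out of `s`, which `M` can replace by its own `$`-transition out of `s`. Thus `M`
satisfies `EF^{L·{$}} ⊤`, hence `δ ∨ EF^{L₀} ψ`. -/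

theorem _root_.List.exists_eq_append_cons_notMem_of_mem {β : Type*} {a : β} {w : List β}
    (hw : a ∈ w) : ∃ u v, w = u ++ a :: v ∧ a ∉ u := by
  induction w with
  | nil => cases hw
  | cons b w ih =>
    by_cases hb : a = b
    · exact ⟨[], w, by simp [hb], List.not_mem_nil⟩
    · obtain ⟨u, v, rfl, hu⟩ := ih ((List.mem_cons.mp hw).resolve_left hb)
      exact ⟨b :: u, v, rfl, by simp [hu, hb]⟩

namespace Path

variable {σ α : Type} {tr : σ → α → σ → Prop}

theorem append {s m u : σ} {w₁ w₂ : List α} (h₁ : Path tr s w₁ m) (h₂ : Path tr m w₂ u) :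
    Path tr s (w₁ ++ w₂) u := by
  induction h₁ with
  | nil => exact h₂
  | cons hstep _ ih => exact .cons hstep (ih h₂)

theorem exists_of_append {s u : σ} {w₁ w₂ : List α} (h : Path tr s (w₁ ++ w₂) u) :
    ∃ m, Path tr s w₁ m ∧ Path tr m w₂ u := by
  induction w₁ generalizing s with
  | nil => exact ⟨s, .nil s, h⟩
  | cons a w ih =>
    cases h with
    | cons hstep hp =>
      obtain ⟨m, h₁, h₂⟩ := ih hp
      exact ⟨m, .cons hstep h₁, h₂⟩

theorem singleton_iff {s t : σ} {a : α} : Path tr s [a] t ↔ tr s a t := by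
  constructor
  · rintro (_ | ⟨hstep, (_ | _)⟩)
    exact hstep
  · exact fun h => .cons h (.nil t)

theorem map_iff {σ' : Type} {tr' : σ' → α → σ' → Prop} (f : σ → σ')
    (hf : ∀ s a x, tr' (f s) a x ↔ ∃ t, tr s a t ∧ x = f t) {s : σ} {w : List α} {x : σ'} :
    Path tr' (f s) w x ↔ ∃ t, Path tr s w t ∧ x = f t := by
  constructor
  · intro h
    induction w generalizing s with
    | nil => cases h; exact ⟨s, .nil s, rfl⟩
    | cons a w ih =>
      cases h with
      | cons hstep hp =>
        obtain ⟨t, ht, rfl⟩ := (hf _ _ _).mp hstep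
        obtain ⟨q, hq, rfl⟩ := ih hp
        exact ⟨q, .cons ht hq, rfl⟩
  · rintro ⟨t, hp, rfl⟩
    induction hp with
    | nil => exact .nil _
    | cons hstep _ ih => exact .cons ((hf _ _ _).mpr ⟨_, hstep, rfl⟩) ih

end Path

theorem sat_iff_of_tr_iff {σ σ' α : Type} {tr : σ → α → σ → Prop} {tr' : σ' → α → σ' → Prop}
    (f : σ → σ') (hf : ∀ s a x, tr' (f s) a x ↔ ∃ t, tr s a t ∧ x = f t)
    (φ : Formula α) (s : σ) : Sat tr' (f s) φ ↔ Sat tr s φ := by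
  induction φ generalizing s with
  | bot | top => rfl
  | or φ ψ ihφ ihψ | and φ ψ ihφ ihψ => simp only [Sat, ihφ, ihψ]
  | EF L φ ih =>
    simp only [Sat, Path.map_iff f hf]
    constructor
    · rintro ⟨w, _, ⟨t, hp, rfl⟩, hw, ht⟩
      exact ⟨w, t, hp, hw, (ih t).mp ht⟩
    · rintro ⟨w, t, hp, hw, ht⟩
      exact ⟨w, f t, ⟨t, hp, rfl⟩, hw, (ih t).mpr ht⟩
  | AG L φ ih =>
    simp only [Sat, Path.map_iff f hf]
    constructor
    · exact fun H w t hp hw => (ih t).mp (H w (f t) ⟨t, hp, rfl⟩ hw)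
    · rintro H w _ ⟨t, hp, rfl⟩ hw
      exact (ih t).mpr (H w t hp hw)

theorem sat_EF_mono {σ α : Type} {tr : σ → α → σ → Prop} {s : σ} {L L' : Set (List α)}
    {φ : Formula α} (hLL' : L ⊆ L') (h : Sat tr s (.EF L φ)) : Sat tr s (.EF L' φ) :=
  let ⟨w, t, hp, hw, ht⟩ := h
  ⟨w, t, hp, hLL' hw, ht⟩

theorem sat_EF_split_first {σ α : Type} {tr : σ → α → σ → Prop} {s : σ} (a : α)
    {L₀ : Set (List α)} {ψ : Formula α} (h : Sat tr s (.EF L₀ ψ)) :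
    Sat tr s (.or (.EF {w ∈ L₀ | a ∉ w} ψ)
      (.EF {x | ∃ u, a ∉ u ∧ x = u ++ [a] ∧ ∃ y ∈ L₀, x <+: y} .top)) := by
  obtain ⟨w, t, hp, hw, ht⟩ := h
  by_cases ha : a ∈ w
  · obtain ⟨u, v, rfl, hu⟩ := w.exists_eq_append_cons_notMem_of_mem ha
    have hsplit : u ++ a :: v = u ++ [a] ++ v := by simp
    obtain ⟨m, hm, -⟩ := (hsplit ▸ hp).exists_of_append
    exact .inr ⟨u ++ [a], m, hm, ⟨u, hu, rfl, _, hw, v, hsplit.symm⟩, trivial⟩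
  · exact .inl ⟨w, t, hp, ⟨hw, ha⟩, ht⟩

namespace Struct

variable {α : Type} (M N : Struct α) (s : M.S) (a : α) (v : List α)

/- `M.graft N s a v` adds to `M` a fresh path labelled `a :: v` from `s` to the root of a copy
of `N`; its interior point `.inr (.inl r)` is the one from which `r` remains to be read. -/

def graftEntry : List α → M.S ⊕ List α ⊕ N.S
  | [] => .inr (.inr N.root)
  | b :: r => .inr (.inl (b :: r))

inductive GraftTr : M.S ⊕ List α ⊕ N.S → α → M.S ⊕ List α ⊕ N.S → Prop
  | base {p q : M.S} {b : α} : M.tr p b q → GraftTr (.inl p) b (.inl q)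
  | bridge : GraftTr (.inl s) a (graftEntry M N v)
  | chain {b : α} {r : List α} : GraftTr (.inr (.inl (b :: r))) b (graftEntry M N r)
  | copy {n m : N.S} {b : α} : N.tr n b m → GraftTr (.inr (.inr n)) b (.inr (.inr m))

def graft : Struct α where
  S := M.S ⊕ List α ⊕ N.S
  tr := GraftTr M N s a v
  root := .inl M.root

variable {M N s a v}

theorem graftTr_copy_iff {n : N.S} {b : α} {x : M.S ⊕ List α ⊕ N.S} :
    GraftTr M N s a v (.inr (.inr n)) b x ↔ ∃ m, N.tr n b m ∧ x = .inr (.inr m) := by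
  constructor
  · rintro ⟨⟩
    exact ⟨_, by assumption, rfl⟩
  · rintro ⟨m, hm, rfl⟩
    exact .copy hm

theorem sat_graft_copy_iff (φ : Formula α) (n : N.S) :
    Sat (GraftTr M N s a v) (.inr (.inr n)) φ ↔ Sat N.tr n φ :=
  sat_iff_of_tr_iff (fun n : N.S => (.inr (.inr n) : M.S ⊕ List α ⊕ N.S)) (fun _ _ _ => graftTr_copy_iff) φ n

theorem graftTr_inl_iff {p : M.S} {b : α} {x : M.S ⊕ List α ⊕ N.S} :
    GraftTr M N s a v (.inl p) b x ↔
      (∃ q, M.tr p b q ∧ x = .inl q) ∨ (p = s ∧ b = a ∧ x = graftEntry M N v) := by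
  constructor
  · rintro (hpq | _)
    · exact .inl ⟨_, hpq, rfl⟩
    · exact .inr ⟨rfl, rfl, rfl⟩
  · rintro (⟨q, hpq, rfl⟩ | ⟨rfl, rfl, rfl⟩)
    · exact .base hpq
    · exact .bridge

theorem path_graft_inl {p q : M.S} {w : List α} (h : Path M.tr p w q) :
    Path (GraftTr M N s a v) (.inl p) w (.inl q) := by
  induction h with
  | nil => exact .nil _
  | cons hstep _ ih => exact .cons (.base hstep) ih

theorem path_graftEntry (r : List α) :
    Path (GraftTr M N s a v) (graftEntry M N r) r (.inr (.inr N.root)) := by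
  induction r with
  | nil => exact .nil _
  | cons b r ih => exact .cons .chain ih

theorem exists_path_of_path_graft_inl {p : M.S} {w : List α} (hw : a ∉ w)
    {x : M.S ⊕ List α ⊕ N.S} (h : Path (GraftTr M N s a v) (.inl p) w x) :
    ∃ q, Path M.tr p w q ∧ x = .inl q := by
  induction w generalizing p with
  | nil => cases h; exact ⟨p, .nil p, rfl⟩
  | cons b w ih =>
    obtain ⟨hab, hw⟩ := not_or.mp (List.mem_cons.not.mp hw)
    cases h with
    | cons hstep hp =>
      rcases graftTr_inl_iff.mp hstep with ⟨q, hpq, rfl⟩ | ⟨-, rfl, -⟩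
      · obtain ⟨q', hq', rfl⟩ := ih hw hp
        exact ⟨q', .cons hpq hq', rfl⟩
      · exact absurd rfl hab

end Struct

section

open Struct

variable {α : Type} {M N : Struct α} {s : M.S} {a : α} {v : List α}

theorem satS_graft_EF {L₀ : Set (List α)} {ψ : Formula α} {u : List α}
    (hu : Path M.tr M.root u s) (hL₀ : u ++ a :: v ∈ L₀) (hN : SatS N ψ) :
    SatS (M.graft N s a v) (.EF L₀ ψ) :=
  ⟨u ++ a :: v, _, (path_graft_inl hu).append (.cons .bridge (path_graftEntry v)), hL₀,
    (sat_graft_copy_iff ψ N.root).mpr hN⟩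

theorem satS_EF_append_singleton_of_graft {L : Set (List α)} (hL : ∀ w ∈ L, a ∉ w)
    (hs : ∃ t, M.tr s a t) (h : SatS (M.graft N s a v) (.EF {x | ∃ w ∈ L, x = w ++ [a]} .top)) :
    SatS M (.EF {x | ∃ w ∈ L, x = w ++ [a]} .top) := by
  obtain ⟨_, _, hp, ⟨w, hw, rfl⟩, -⟩ := h
  obtain ⟨_, hp, hlast⟩ := hp.exists_of_append
  obtain ⟨q, hq, rfl⟩ := exists_path_of_path_graft_inl (hL w hw) hp
  obtain ⟨t, hqt⟩ : ∃ t, M.tr q a t := by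
    rcases graftTr_inl_iff.mp (Path.singleton_iff.mp hlast) with ⟨t, hqt, -⟩ | ⟨rfl, -, -⟩
    exacts [⟨t, hqt⟩, hs]
  exact ⟨w ++ [a], t, hq.append (Path.singleton_iff.mpr hqt), ⟨w, hw, rfl⟩, trivial⟩

end

/-- If `EF^{L·{$}} ⊤ ≡ δ ∨ EF^{L₀} ψ` with `L` a language of `$`-free words
and `ψ` satisfiable, then `δ ∨ EF^{L₀} ψ ≡ δ ∨ EF^{L₁} ψ ∨ EF^{L₂} ⊤`, where
`L₁` is the set of `$`-free words of `L₀` and `L₂` is the set of words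
`u ++ [$]` with `u` `$`-free that are prefixes of words in `L₀`. -/
theorem stmt_13 {α : Type} (dollar : α) (L₀ L : Set (List α))
    (hL : ∀ w ∈ L, dollar ∉ w)
    (δ ψ : Formula α) (hψ : ∃ M : Struct α, SatS M ψ)
    (h : FEquiv (.EF {x | ∃ w ∈ L, x = w ++ [dollar]} .top) (.or δ (.EF L₀ ψ))) :
    FEquiv (.or δ (.EF L₀ ψ))
      (.or δ (.or (.EF {w ∈ L₀ | dollar ∉ w} ψ)
        (.EF {x | ∃ u, dollar ∉ u ∧ x = u ++ [dollar] ∧ ∃ y ∈ L₀, x <+: y} .top))) := by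
  intro M
  constructor
  · rintro (hδ | hEF)
    · exact .inl hδ
    · exact .inr (sat_EF_split_first dollar hEF)
  · rintro (hδ | hL₁ | ⟨_, t, hp, ⟨u, -, rfl, _, hy, v, rfl⟩, -⟩)
    · exact .inl hδ
    · exact .inr (sat_EF_mono (fun _ hw => hw.1) hL₁)
    · obtain ⟨N, hN⟩ := hψ
      obtain ⟨s, hu, hst⟩ := hp.exists_of_append
      have hgraft : SatS (M.graft N s dollar v) (.or δ (.EF L₀ ψ)) :=
        .inr (satS_graft_EF hu (by simpa using hy) hN)
      exact (h M).mp (satS_EF_append_singleton_of_graft hL ⟨t, Path.singleton_iff.mp hst⟩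
        ((h _).mpr hgraft))

end PDL
end

section
/- Let I be a finite index set and, for each i ∈ I, let L_i be a nonempty language over Σ and ψ_i a test-free PDL formula such that either (a) every word of L_i is nonempty and $-free, or (b) every word of L_i has the form u ++ [$] with u $-free, and ψ_i = ⊤. Define L_i^♮ := L_i in case (a) and L_i^♮ := {u | u is $-free and u ++ [$] ∈ L_i} in case (b), and R_i := Lang(ψ_i) in case (a) and R_i := {ε} in case (b). Then Lang(⋁_{i∈I} EF^{L_i} ψ_i) = ⋃_{i∈I} L_i^♮ * R_i, where * is the product of languages. -/
namespace PDL

/-!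
The shift `i ↦ |u| + i` is a bisimulation from `π_z` to `π_{u ++ z}`, and PDL satisfaction is
bisimulation invariant; hence the state of `π_z` reached by reading a prefix `x` of `z = x ++ y`
satisfies `ψ` iff `π_y` does. So `π_{w$} ⊨ EF^L ψ` iff `w$ = x ++ y` with `x ∈ L` and `π_y ⊨ ψ`.
If `x` is `$`-free, the only `$` lies in `y`, so `y = v$` with `w = x ++ v`, `v ∈ Lang ψ`.
If `x = u$` with `u` `$`-free, the `$` of `x` is the last letter of `w$`, so `u = w` and `y = ε`.
-/

theorem sat_bigOr_iff {σ α : Type} (tr : σ → α → σ → Prop) (s : σ) (l : List (Formula α)) :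
    Sat tr s (bigOr l) ↔ ∃ φ ∈ l, Sat tr s φ := by
  induction l with
  | nil => simp [bigOr, Sat]
  | cons φ l ih => simp [bigOr, Sat, ih]

section Bisimulation

variable {σ τ α : Type}

def IsBisimulation (tr : σ → α → σ → Prop) (tr' : τ → α → τ → Prop) (R : σ → τ → Prop) :
    Prop :=
  (∀ s s' a t, R s s' → tr s a t → ∃ t', tr' s' a t' ∧ R t t') ∧
    ∀ s s' a t', R s s' → tr' s' a t' → ∃ t, tr s a t ∧ R t t'

variable {tr : σ → α → σ → Prop} {tr' : τ → α → τ → Prop} {R : σ → τ → Prop}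

theorem IsBisimulation.symm (h : IsBisimulation tr tr' R) :
    IsBisimulation tr' tr (flip R) :=
  ⟨fun _ _ _ _ hR ht => h.2 _ _ _ _ hR ht, fun _ _ _ _ hR ht => h.1 _ _ _ _ hR ht⟩

theorem IsBisimulation.exists_path (h : IsBisimulation tr tr' R) {s t : σ} {s' : τ}
    {w : List α} (hR : R s s') (hp : Path tr s w t) : ∃ t', Path tr' s' w t' ∧ R t t' := by
  induction hp generalizing s' with
  | nil => exact ⟨s', .nil s', hR⟩
  | cons hst _ ih =>
    obtain ⟨u', hsu', hu⟩ := h.1 _ _ _ _ hR hst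
    obtain ⟨t', hp', ht⟩ := ih hu
    exact ⟨t', .cons hsu' hp', ht⟩

theorem IsBisimulation.sat_iff (h : IsBisimulation tr tr' R) {s : σ} {s' : τ} (hR : R s s')
    (φ : Formula α) : Sat tr s φ ↔ Sat tr' s' φ := by
  induction φ generalizing s s' with
  | bot | top => rfl
  | or φ ψ ihφ ihψ => exact or_congr (ihφ hR) (ihψ hR)
  | and φ ψ ihφ ihψ => exact and_congr (ihφ hR) (ihψ hR)
  | EF L φ ih =>
    constructor
    · rintro ⟨w, t, hp, hw, ht⟩
      obtain ⟨t', hp', htt'⟩ := h.exists_path hR hp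
      exact ⟨w, t', hp', hw, (ih htt').1 ht⟩
    · rintro ⟨w, t', hp', hw, ht'⟩
      obtain ⟨t, hp, htt'⟩ := h.symm.exists_path hR hp'
      exact ⟨w, t, hp, hw, (ih htt').2 ht'⟩
  | AG L φ ih =>
    constructor
    · intro hs w t' hp' hw
      obtain ⟨t, hp, htt'⟩ := h.symm.exists_path hR hp'
      exact (ih htt').1 (hs w t hp hw)
    · intro hs w t hp hw
      obtain ⟨t', hp', htt'⟩ := h.exists_path hR hp
      exact (ih htt').2 (hs w t' hp' hw)

end Bisimulation

section PathStruct

variable {α : Type}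

theorem path_pathStruct_iff (z : List α) (s t : Fin (z.length + 1)) (x : List α) :
    Path (pathStruct z).tr s x t ↔ x <+: z.drop s ∧ (t : ℕ) = s + x.length := by
  induction x generalizing s with
  | nil =>
    refine ⟨fun h => by cases h; simp, fun ⟨_, h⟩ => ?_⟩
    obtain rfl : s = t := Fin.ext (by simpa using h.symm)
    exact .nil s
  | cons a x ih =>
    constructor
    · rintro (_ | ⟨⟨hs, rfl, hu⟩, hp⟩)
      replace hp := (ih _).1 hp
      rw [hu] at hp
      rw [List.drop_eq_getElem_cons hs]
      exact ⟨List.cons_prefix_cons.2 ⟨rfl, hp.1⟩, by simp [hp.2]; omega⟩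
    · rintro ⟨hpre, ht⟩
      have hs : (s : ℕ) < z.length := by
        by_contra hs
        simp [List.drop_eq_nil_of_le (Nat.le_of_not_lt hs)] at hpre
      rw [List.drop_eq_getElem_cons hs, List.cons_prefix_cons] at hpre
      refine .cons (t := ⟨s + 1, by omega⟩) ⟨hs, hpre.1.symm, rfl⟩ ((ih _).2 ⟨hpre.2, ?_⟩)
      simp at ht ⊢
      omega

theorem isBisimulation_pathStruct_append (u z : List α) :
    IsBisimulation (pathStruct z).tr (pathStruct (u ++ z)).tr
      (fun (i : Fin (z.length + 1)) (j : Fin ((u ++ z).length + 1)) => (j : ℕ) = u.length + i) := by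
  constructor
  · rintro i j a (i' : Fin _) hij ⟨hi, rfl, hi'⟩
    refine ⟨⟨u.length + i', by simp; omega⟩, ⟨by simp; omega, ?_, by simp [hij, hi']; omega⟩, rfl⟩
    simp [hij, List.getElem_append_right]
  · rintro (i : Fin _) j a j' hij ⟨hj, rfl, hj'⟩
    have hi : (i : ℕ) < z.length := by simp at hj; omega
    refine ⟨⟨i + 1, by omega⟩, ⟨hi, ?_, rfl⟩, by simp [hj', hij]; omega⟩
    simp [hij, List.getElem_append_right]

theorem sat_pathStruct_append_iff (u z : List α) (t : Fin ((u ++ z).length + 1))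
    (ht : (t : ℕ) = u.length) (φ : Formula α) :
    Sat (pathStruct (u ++ z)).tr t φ ↔ SatS (pathStruct z) φ :=
  ((isBisimulation_pathStruct_append u z).sat_iff (s := (pathStruct z).root) ht φ).symm

theorem satS_pathStruct_EF_iff (z : List α) (L : Set (List α)) (ψ : Formula α) :
    SatS (pathStruct z) (.EF L ψ) ↔ ∃ x y, z = x ++ y ∧ x ∈ L ∧ SatS (pathStruct y) ψ := by
  constructor
  · rintro ⟨x, t, hp, hx, ht⟩
    obtain ⟨⟨y, rfl⟩, htx⟩ := (path_pathStruct_iff z _ t x).1 hp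
    exact ⟨x, y, rfl, hx, (sat_pathStruct_append_iff x y t (by simpa [pathStruct] using htx) ψ).1 ht⟩
  · rintro ⟨x, y, rfl, hx, hy⟩
    refine ⟨x, ⟨x.length, by simp⟩, (path_pathStruct_iff _ _ _ x).2 ?_, hx,
      (sat_pathStruct_append_iff x y _ rfl ψ).2 hy⟩
    simp [pathStruct]

end PathStruct

theorem exists_eq_append_of_append_singleton_eq_append {α : Type} {a : α} {w x y : List α}
    (hx : a ∉ x) (h : w ++ [a] = x ++ y) : ∃ v, w = x ++ v ∧ y = v ++ [a] := by
  rcases List.append_eq_append_iff.1 h with ⟨b, rfl, hb⟩ | hv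
  · rcases List.singleton_eq_append_iff.1 hb with ⟨rfl, rfl⟩ | ⟨rfl, -⟩
    · exact ⟨[], by simp, rfl⟩
    · simp at hx
  · exact hv

section Lang

variable {α : Type} (dollar : α)

theorem lang_bigOr (l : List (Formula α)) : Lang dollar (bigOr l) = ⋃ φ ∈ l, Lang dollar φ := by
  ext w
  simp [Lang, SatS, sat_bigOr_iff]

theorem lang_EF_of_forall_not_mem {L : Set (List α)} (hL : ∀ x ∈ L, dollar ∉ x) (ψ : Formula α) :
    Lang dollar (.EF L ψ) = {w | ∃ u ∈ L, ∃ v ∈ Lang dollar ψ, w = u ++ v} := by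
  ext w
  simp only [Lang, Set.mem_ofPred_eq, satS_pathStruct_EF_iff]
  constructor
  · rintro ⟨hw, x, y, hxy, hx, hy⟩
    obtain ⟨v, rfl, rfl⟩ := exists_eq_append_of_append_singleton_eq_append (hL x hx) hxy
    exact ⟨x, hx, v, ⟨fun hv => hw (List.mem_append_right x hv), hy⟩, rfl⟩
  · rintro ⟨u, hu, v, ⟨hv, hψ⟩, rfl⟩
    exact ⟨by simp [hL u hu, hv], u, v ++ [dollar], by simp, hu, hψ⟩

theorem lang_EF_top_of_forall_eq_append_singleton {L : Set (List α)}
    (hL : ∀ x ∈ L, ∃ u, dollar ∉ u ∧ x = u ++ [dollar]) :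
    Lang dollar (.EF L .top) = {u | dollar ∉ u ∧ u ++ [dollar] ∈ L} := by
  ext w
  simp only [Lang, Set.mem_ofPred_eq, satS_pathStruct_EF_iff]
  constructor
  · rintro ⟨hw, x, y, hxy, hx, -⟩
    obtain ⟨u, hu, rfl⟩ := hL x hx
    rw [List.append_assoc] at hxy
    obtain ⟨v, rfl, hv⟩ := exists_eq_append_of_append_singleton_eq_append hu hxy
    obtain rfl : v = [] := by
      cases v with
      | nil => rfl
      | cons b v =>
        obtain ⟨rfl, -⟩ : dollar = b ∧ _ := by simpa using hv
        simp at hw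
    rw [List.append_nil]
    exact ⟨hu, hx⟩
  · rintro ⟨hw, hwL⟩
    exact ⟨hw, w ++ [dollar], [], by simp, hwL, trivial⟩

end Lang

theorem stmt_14_general {α : Type} (dollar : α) {m : ℕ}
    (Ls : Fin m → Set (List α)) (ψs : Fin m → Formula α)
    (c : Fin m → Bool)
    (hcaseA : ∀ i, c i = true → ∀ w ∈ Ls i, w ≠ [] ∧ dollar ∉ w)
    (hcaseB : ∀ i, c i = false →
      (∀ w ∈ Ls i, ∃ u, dollar ∉ u ∧ w = u ++ [dollar]) ∧ ψs i = Formula.top) :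
    Lang dollar (bigOr ((List.finRange m).map fun i => Formula.EF (Ls i) (ψs i))) =
      ⋃ i : Fin m,
        {w | ∃ u ∈ (if c i = true then Ls i
                    else {u | dollar ∉ u ∧ u ++ [dollar] ∈ Ls i}),
             ∃ v ∈ (if c i = true then Lang dollar (ψs i)
                    else ({[]} : Set (List α))),
             w = u ++ v} := by
  calc Lang dollar (bigOr ((List.finRange m).map fun i => Formula.EF (Ls i) (ψs i)))
      = ⋃ i : Fin m, Lang dollar (Formula.EF (Ls i) (ψs i)) := by simp [lang_bigOr]
    _ = _ := Set.iUnion_congr fun i => ?_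
  cases hc : c i
  · obtain ⟨hL, hψ⟩ := hcaseB i hc
    simp [hψ, lang_EF_top_of_forall_eq_append_singleton dollar hL]
  · simpa using lang_EF_of_forall_not_mem dollar (fun x hx => (hcaseA i hc x hx).2) (ψs i)

/-- If each `L_i` is a nonempty language such that either (case `c i = true`)
all its words are nonempty and `$`-free, or (case `c i = false`) all its words
have the form `u ++ [$]` with `u` `$`-free and `ψ_i = ⊤`, then
`Lang (⋁_i EF^{L_i} ψ_i) = ⋃_i L_i^♮ * R_i` where `L_i^♮ := L_i` resp.
`L_i / $`, and `R_i := Lang ψ_i` resp. `{ε}`. -/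
theorem stmt_14 {α : Type} (dollar : α) {m : ℕ}
    (Ls : Fin m → Set (List α)) (ψs : Fin m → Formula α)
    (hne : ∀ i, (Ls i).Nonempty) (c : Fin m → Bool)
    (hcaseA : ∀ i, c i = true → ∀ w ∈ Ls i, w ≠ [] ∧ dollar ∉ w)
    (hcaseB : ∀ i, c i = false →
      (∀ w ∈ Ls i, ∃ u, dollar ∉ u ∧ w = u ++ [dollar]) ∧ ψs i = Formula.top) :
    Lang dollar (bigOr ((List.finRange m).map fun i => Formula.EF (Ls i) (ψs i))) =
      ⋃ i : Fin m,
        {w | ∃ u ∈ (if c i = true then Ls i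
                    else {u | dollar ∉ u ∧ u ++ [dollar] ∈ Ls i}),
             ∃ v ∈ (if c i = true then Lang dollar (ψs i)
                    else ({[]} : Set (List α))),
             w = u ++ v} :=
  stmt_14_general dollar Ls ψs c hcaseA hcaseB

end PDL
end

section
/- Let P be a language of $-free words over Σ and L an arbitrary language over Σ. If EF^{P·{$}} ⊤ is equivalent to EF^L ⊤, then P = {w | w is $-free and w ++ [$] is a prefix of some word in L}. -/
namespace PDLAux
open PDL

variable {α : Type}

theorem path_mono {σ : Type} {tr tr' : σ → α → σ → Prop}
    (h : ∀ s a t, tr s a t → tr' s a t) {s w t} (p : Path tr s w t) : Path tr' s w t := by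
  induction p with
  | nil s => exact .nil s
  | cons hs _ ih => exact .cons (h _ _ _ hs) ih

/-- sink transition: path transitions plus a universal loop at the last state. -/
def sinkTr (y : List α) : Fin (y.length + 1) → α → Fin (y.length + 1) → Prop :=
  fun i a j => (pathStruct y).tr i a j ∨ ((i : ℕ) = y.length ∧ (j : ℕ) = y.length)

def sinkStruct (y : List α) : Struct α :=
  ⟨Fin (y.length + 1), sinkTr y, ⟨0, Nat.succ_pos _⟩⟩

theorem path_of_prefix (y : List α) :
    ∀ (v : List α) (i : ℕ) (hi : i ≤ y.length), v <+: y.drop i →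
      ∃ t, Path (pathStruct y).tr ⟨i, by omega⟩ v t
  | [], i, hi, _ => ⟨⟨i, by omega⟩, .nil _⟩
  | a :: v, i, hi, hv => by
    have hlt : i < y.length := by
      by_contra hc
      rw [List.drop_eq_nil_of_le (by omega)] at hv
      exact absurd hv.length_le (by simp)
    rw [List.drop_eq_getElem_cons hlt, List.cons_prefix_cons] at hv
    obtain ⟨t, ht⟩ := path_of_prefix y v (i + 1) hlt hv.2
    exact ⟨t, .cons ⟨hlt, hv.1.symm ▸ rfl, rfl⟩ ht⟩

theorem prefix_of_path {y : List α} {v : List α} {s t : Fin (y.length + 1)}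
    (p : Path (pathStruct y).tr s v t) : v <+: y.drop s := by
  induction p with
  | nil s => exact List.nil_prefix
  | cons hs _ ih =>
    obtain ⟨h1, h2, h3⟩ := hs
    rw [List.drop_eq_getElem_cons h1, List.cons_prefix_cons]
    exact ⟨by first | simpa using h2 | simpa using h2.symm, by rwa [← h3]⟩

theorem sink_path {y : List α} {v : List α} {s t : Fin (y.length + 1)}
    (p : Path (sinkTr y) s v t) : v <+: y.drop s ∨ y.drop s <+: v := by
  induction p with
  | nil s => exact .inl List.nil_prefix
  | cons hs _ ih =>
    rcases hs with ⟨h1, h2, h3⟩ | ⟨h1, h2⟩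
    · rw [List.drop_eq_getElem_cons h1]
      rcases ih with ih | ih
      · exact .inl (List.cons_prefix_cons.2 ⟨by first | simpa using h2 | simpa using h2.symm, by rwa [← h3]⟩)
      · exact .inr (List.cons_prefix_cons.2 ⟨by first | simpa using h2 | simpa using h2.symm, by rwa [← h3]⟩)
    · rw [List.drop_eq_nil_of_le (by omega)]
      exact .inr List.nil_prefix

theorem eq_of_dollar_prefix_aux {dollar : α} {u w : List α} (hw : dollar ∉ w)
    (h : u ++ [dollar] <+: w ++ [dollar]) : u = w := by
  obtain ⟨t, ht⟩ := h
  rcases t.eq_nil_or_concat with rfl | ⟨t', a, rfl⟩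
  · rw [List.append_nil] at ht
    exact (List.append_inj' ht rfl).1
  · rw [List.concat_eq_append, ← List.append_assoc] at ht
    obtain ⟨h1, -⟩ := List.append_inj' ht rfl
    exact absurd (h1 ▸ (by simp : dollar ∈ u ++ [dollar] ++ t')) hw

theorem eq_of_dollar_prefix {dollar : α} {u w y : List α} (hu : dollar ∉ u) (hw : dollar ∉ w)
    (h1 : u ++ [dollar] <+: y) (h2 : w ++ [dollar] <+: y) : u = w := by
  rcases List.prefix_or_prefix_of_prefix h1 h2 with h | h
  · exact eq_of_dollar_prefix_aux hw h
  · exact (eq_of_dollar_prefix_aux hu h).symm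

theorem prefix_of_path_root {y v : List α} {t} (p : Path (pathStruct y).tr (pathStruct y).root v t) :
    v <+: y := by
  simpa [pathStruct] using prefix_of_path p

theorem sink_path_root {y v : List α} {t} (p : Path (sinkTr y) (sinkStruct y).root v t) :
    v <+: y ∨ y <+: v := by
  simpa [sinkStruct] using sink_path p

end PDLAux

namespace PDL
open PDLAux


/-- If `EF^{P·{$}} ⊤ ≡ EF^L ⊤` with `P` a language of `$`-free words, then
`P` is exactly the set of `$`-free words `w` such that `w ++ [$]` is a prefix
of some word in `L`. -/
theorem stmt_15 {α : Type} (dollar : α) (P L : Set (List α))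
    (hP : ∀ w ∈ P, dollar ∉ w)
    (h : FEquiv (.EF {x | ∃ w ∈ P, x = w ++ [dollar]} .top) (.EF L .top)) :
    P = {w | dollar ∉ w ∧ ∃ y ∈ L, (w ++ [dollar]) <+: y} := by
  ext w
  simp only [Set.mem_setOf_eq]
  constructor
  · intro hw
    have hwd := hP w hw
    refine ⟨hwd, ?_⟩
    set y := w ++ [dollar] with hy
    have h1 : SatS (sinkStruct y) (.EF {x | ∃ w ∈ P, x = w ++ [dollar]} .top) := by
      obtain ⟨t, ht⟩ := path_of_prefix y y 0 (Nat.zero_le _) (by simp)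
      exact ⟨y, t, path_mono (fun s a t h => Or.inl h) ht, ⟨w, hw, rfl⟩, trivial⟩
    obtain ⟨z, t, hpath, hzL, -⟩ := (h (sinkStruct y)).1 h1
    rcases sink_path_root hpath with hz | hz
    · by_cases hlen : z.length = y.length
      · have hzy : z = y := hz.eq_of_length hlen
        exact ⟨z, hzL, hzy ▸ List.prefix_refl _⟩
      · have hzw : z <+: w := by
          apply List.prefix_of_prefix_length_le hz (List.prefix_append w [dollar])
          have := hz.length_le
          simp only [hy, List.length_append, List.length_singleton] at this hlen ⊢
          omega
        have h3 : SatS (pathStruct z) (.EF L .top) := by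
          obtain ⟨t, ht⟩ := path_of_prefix z z 0 (Nat.zero_le _) (by simp)
          exact ⟨z, t, ht, hzL, trivial⟩
        obtain ⟨x, t', hpath', ⟨u, huP, rfl⟩, -⟩ := (h (pathStruct z)).2 h3
        have hud : u ++ [dollar] <+: z := prefix_of_path_root hpath'
        have : dollar ∈ w := (hud.trans hzw).sublist.subset (by simp)
        exact absurd this hwd
    · exact ⟨z, hzL, hz⟩
  · rintro ⟨hwd, y, hyL, hpre⟩
    have h3 : SatS (pathStruct y) (.EF L .top) := by
      obtain ⟨t, ht⟩ := path_of_prefix y y 0 (Nat.zero_le _) (by simp)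
      exact ⟨y, t, ht, hyL, trivial⟩
    obtain ⟨x, t, hpath, ⟨u, huP, rfl⟩, -⟩ := (h (pathStruct y)).2 h3
    have hu : u ++ [dollar] <+: y := prefix_of_path_root hpath
    have : u = w := eq_of_dollar_prefix (hP u huP) hwd hu hpre
    exact this ▸ huP

end PDL
end

section
/- Let Σ be a type with elements z and o, and let v be a word over Σ. Define the sequence of words w₀ := v.reverse and w_{i+1} := w_i ++ [o] ++ (replicate i z) ++ [o] ++ w_i.reverse ++ v.reverse. Then for every i ∈ ℕ: (i) v ++ w_i is a palindrome, i.e. (v ++ w_i).reverse = v ++ w_i, and (ii) w_i is a proper prefix of w_{i+1}. -/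
/-- For the sequence `w₀ := v.reverse`,
`w_{i+1} := w_i ++ [o] ++ replicate i z ++ [o] ++ w_i.reverse ++ v.reverse`,
every `v ++ w_i` is a palindrome and each `w_i` is a proper prefix of `w_{i+1}`. -/
theorem stmt_16 {α : Type*} (z o : α) (v : List α) (w : ℕ → List α)
    (h0 : w 0 = v.reverse)
    (hs : ∀ i, w (i + 1) =
      w i ++ [o] ++ List.replicate i z ++ [o] ++ (w i).reverse ++ v.reverse) :
    ∀ i, (v ++ w i).reverse = v ++ w i ∧
      ∃ x : List α, x ≠ [] ∧ w i ++ x = w (i + 1) := by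
  have pal : ∀ i, (v ++ w i).reverse = v ++ w i := by
    intro i
    induction i with
    | zero => simp [h0]
    | succ n ih =>
      have key : (w n).reverse ++ v.reverse = v ++ w n := by
        simpa [List.reverse_append] using ih
      rw [hs n]
      simp only [List.reverse_append, List.reverse_replicate, List.reverse_reverse,
        List.reverse_singleton, List.append_assoc] at key ⊢
  intro i
  refine ⟨pal i, [o] ++ List.replicate i z ++ [o] ++ (w i).reverse ++ v.reverse, by simp, ?_⟩
  rw [hs i]
  simp [List.append_assoc]
end
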